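/- arXiv:math/0206301 — 2 statements merged into one kernel-verified Lean document; each statement's English description precedes it below -/
import Mathlib

section
/- Let K be a field and d ∈ K. In the Temperley–Lieb category over (K,d), for all m, n ∈ ℕ and all a ∈ Hom(m,n), b ∈ Hom(n,m), the Markov trace satisfies Tr_m(b∘a) = Tr_n(a∘b). -/
/-!
Common definitions: the Temperley–Lieb category over a field `K` with loop
parameter `d`.

An `(m,n)`-Temperley–Lieb diagram is a noncrossing perfect matching of `m`
marked points on the top edge and `n` marked points on the bottom edge of a
rectangle.  We encode it as a fixed-point-free involution of
`Fin m ⊕ Fin n` (`Sum.inl i` is the `i`-th top point, `Sum.inr j` the `j`-th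
bottom point) which is noncrossing with respect to the boundary order of the
points (top points from left to right, then bottom points from right to left).
-/

open scoped Classical

namespace TL

/-- The position of a marked point in the linear boundary order of the
rectangle: top points `0, …, m-1` from left to right, then bottom points
from right to left. -/
def bIdx (m n : ℕ) : Fin m ⊕ Fin n → ℕ
  | Sum.inl i => (i : ℕ)
  | Sum.inr j => m + (n - 1 - (j : ℕ))

/-- An `(m,n)`-Temperley–Lieb diagram: a noncrossing perfect matching
(= fixed-point-free involution) of the `m` top points and `n` bottom points. -/
structure Diagram (m n : ℕ) where
  pair : Fin m ⊕ Fin n → Fin m ⊕ Fin n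
  involutive : Function.Involutive pair
  fixedPointFree : ∀ x, pair x ≠ x
  noncrossing : ∀ x y, ¬ (bIdx m n x < bIdx m n y ∧ bIdx m n y < bIdx m n (pair x) ∧
      bIdx m n (pair x) < bIdx m n (pair y))

noncomputable instance (m n : ℕ) : Fintype (Diagram m n) :=
  Fintype.ofInjective (fun D => D.pair)
    (fun a b h => by cases a; cases b; simpa using h)

/-- `Hom K m n` is the `K`-vector space of morphisms from `m` to `n`:
the free vector space on the set of `(m,n)`-TL diagrams, realized as the
space of `K`-valued functions on the (finite) set of diagrams. -/
abbrev Hom (K : Type) [Field K] (m n : ℕ) : Type := Diagram m n → K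

variable {K : Type} [Field K]

/-- The basis vector of `Hom K m n` corresponding to a single diagram. -/
noncomputable def single {m n : ℕ} (p : Diagram m n) : Hom K m n :=
  fun c => if c = p then 1 else 0

/-! ### Composition -/

/-- The marked points of the picture obtained by stacking an `(l,m)`-diagram
on top of an `(m,n)`-diagram: `l` top points, `m` middle points, `n` bottom
points. -/
abbrev Pt (l m n : ℕ) := Fin l ⊕ (Fin m ⊕ Fin n)

/-- One strand of the stacked picture: either a strand of the top diagram `a`
(on the `l` top and `m` middle points) or a strand of the bottom diagram `b`
(on the `m` middle and `n` bottom points). -/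
def Step {l m n : ℕ} (a : Diagram l m) (b : Diagram m n) : Pt l m n → Pt l m n → Prop :=
  fun x y =>
    (∃ u : Fin l ⊕ Fin m, Sum.map id Sum.inl u = x ∧ Sum.map id Sum.inl (a.pair u) = y) ∨
    (∃ u : Fin m ⊕ Fin n, Sum.inr u = x ∧ Sum.inr (b.pair u) = y)

/-- Connectivity in the stacked picture: two marked points are connected if
they are joined by a path of strands. -/
def Conn {l m n : ℕ} (a : Diagram l m) (b : Diagram m n) : Pt l m n → Pt l m n → Prop :=
  Relation.EqvGen (Step a b)

/-- The points of the middle layer whose connected component stays entirely in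
the middle layer; these components are exactly the closed loops produced when
stacking. -/
def ClosedMid {l m n : ℕ} (a : Diagram l m) (b : Diagram m n) : Set (Pt l m n) :=
  {x | (∃ j : Fin m, x = Sum.inr (Sum.inl j)) ∧
    ∀ y, Conn a b x y → ∃ j : Fin m, y = Sum.inr (Sum.inl j)}

/-- The number of closed loops produced when stacking `a` on top of `b`:
the number of connected components consisting entirely of middle points. -/
noncomputable def numLoops {l m n : ℕ} (a : Diagram l m) (b : Diagram m n) : ℕ :=
  Nat.card (Quotient (⟨fun x y : ClosedMid a b => Conn a b x.1 y.1,
    ⟨fun _ => Relation.EqvGen.refl _, fun h => Relation.EqvGen.symm _ _ h,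
      fun h h' => Relation.EqvGen.trans _ _ _ h h'⟩⟩ : Setoid (ClosedMid a b)))

/-- Composition of two diagrams `b ∘ a` (stack `a` on top of `b`, delete the
`r` closed loops, multiply by `d ^ r`), expressed as an element of
`Hom K l n`: the result is `d ^ r` times the unique `(l,n)`-diagram inducing
the same pairing of the outer points as the connectivity of the stacked
picture. -/
noncomputable def compD (d : K) {l m n : ℕ} (b : Diagram m n) (a : Diagram l m) :
    Hom K l n :=
  fun c =>
    if ∀ x : Fin l ⊕ Fin n,
        Conn a b (Sum.map id Sum.inr x) (Sum.map id Sum.inr (c.pair x))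
    then d ^ numLoops a b else 0

/-- Composition `b ∘ a : Hom K l n` of `b : Hom K m n` with `a : Hom K l m`
(bilinear extension of composition of diagrams). -/
noncomputable def comp (d : K) {l m n : ℕ} (b : Hom K m n) (a : Hom K l m) :
    Hom K l n :=
  fun c => ∑ p : Diagram m n, ∑ q : Diagram l m, b p * a q * compD d p q c

/-! ### Tensor product -/

/-- Relabelling of the marked points of a horizontal juxtaposition of an
`(m,n)`-diagram (placed on the left) and an `(m',n')`-diagram (on the right). -/
def tEquiv (m n m' n' : ℕ) :
    (Fin (m + m') ⊕ Fin (n + n')) ≃ ((Fin m ⊕ Fin n) ⊕ (Fin m' ⊕ Fin n')) :=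
  (Equiv.sumCongr finSumFinEquiv.symm finSumFinEquiv.symm).trans
    (Equiv.sumSumSumComm _ _ _ _)

/-- The pairing of the horizontal juxtaposition of two diagrams. -/
def tensorPair {m n m' n' : ℕ} (a : Diagram m n) (b : Diagram m' n') :
    Fin (m + m') ⊕ Fin (n + n') → Fin (m + m') ⊕ Fin (n + n') :=
  fun x => (tEquiv m n m' n').symm (Sum.map a.pair b.pair (tEquiv m n m' n' x))

/-- The tensor product (horizontal juxtaposition) of two diagrams, as an
element of `Hom K (m+m') (n+n')`: the basis vector of the unique diagram whose
pairing is the juxtaposed pairing. -/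
noncomputable def tensorD {m n m' n' : ℕ} (a : Diagram m n) (b : Diagram m' n') :
    Hom K (m + m') (n + n') :=
  fun c => if c.pair = tensorPair a b then 1 else 0

/-- The tensor product of morphisms (bilinear extension of horizontal
juxtaposition of diagrams). -/
noncomputable def tensor {m n m' n' : ℕ} (x : Hom K m n) (y : Hom K m' n') :
    Hom K (m + m') (n + n') :=
  fun c => ∑ p : Diagram m n, ∑ q : Diagram m' n', x p * y q * tensorD p q c

/-! ### Identity, cup and cap -/

/-- The identity diagram `1_n`: `n` vertical strands. -/
def idD (n : ℕ) : Diagram n n where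
  pair := Sum.elim Sum.inr Sum.inl
  involutive := by rintro (i | i) <;> rfl
  fixedPointFree := by rintro (i | i) <;> simp
  noncrossing := by
    rintro (i | i) (j | j) <;>
      · simp only [Sum.elim_inl, Sum.elim_inr, bIdx]
        have hi := i.isLt; have hj := j.isLt; omega

/-- The identity morphism `1_n ∈ T_n`. -/
noncomputable def idHom (K : Type) [Field K] (n : ℕ) : Hom K n n :=
  fun c => if c = idD n then 1 else 0

/-- The cap `∩`: the unique `(0,2)`-TL diagram. -/
def capD : Diagram 0 2 where
  pair := fun x => match x with
    | Sum.inl i => i.elim0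
    | Sum.inr j => Sum.inr ⟨1 - (j : ℕ), by omega⟩
  involutive := by intro x; revert x; decide
  fixedPointFree := by decide
  noncrossing := by decide

/-- The cup `∪`: the unique `(2,0)`-TL diagram. -/
def cupD : Diagram 2 0 where
  pair := fun x => match x with
    | Sum.inl j => Sum.inl ⟨1 - (j : ℕ), by omega⟩
    | Sum.inr i => i.elim0
  involutive := by intro x; revert x; decide
  fixedPointFree := by decide
  noncrossing := by decide

/-- The cap `∩` as a morphism in `Hom K 0 2`. -/
noncomputable def capHom (K : Type) [Field K] : Hom K 0 2 :=
  fun c => if c = capD then 1 else 0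

/-- The cup `∪` as a morphism in `Hom K 2 0`. -/
noncomputable def cupHom (K : Type) [Field K] : Hom K 2 0 :=
  fun c => if c = cupD then 1 else 0

/-! ### The Markov trace -/

/-- The strands of the picture obtained from an `(n,n)`-diagram `p` by closing
it up: joining, for each `i`, the `i`-th top point to the `i`-th bottom point
(by nested arcs passing to the right of the rectangle). -/
def closeStep {n : ℕ} (p : Diagram n n) : (Fin n ⊕ Fin n) → (Fin n ⊕ Fin n) → Prop :=
  fun x y => p.pair x = y ∨ Sum.elim Sum.inr Sum.inl x = y

/-- The number `c(p)` of closed loops of the closure of an `(n,n)`-diagram. -/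
noncomputable def trLoops {n : ℕ} (p : Diagram n n) : ℕ :=
  Nat.card (Quotient (Relation.EqvGen.setoid (closeStep p)))

/-- The Markov trace `Tr_n : T_n → K`, sending a diagram `p` to
`d ^ c(p)`. -/
noncomputable def Tr (d : K) {n : ℕ} (x : Hom K n n) : K :=
  ∑ p : Diagram n n, x p * d ^ trLoops p

/-! ### Conditional expectations -/

/-- The conditional expectation `ε_n : T_{n+1} → T_n`,
`a ↦ (1_n ⊗ ∪) ∘ (a ⊗ 1_1) ∘ (1_n ⊗ ∩)` (closing up the last strand). -/
noncomputable def eps (d : K) (n : ℕ) (a : Hom K (n + 1) (n + 1)) : Hom K n n :=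
  let u : Hom K n (n + 2) := tensor (idHom K n) (capHom K)
  let v : Hom K (n + 2) (n + 2) := @tensor K _ (n + 1) (n + 1) 1 1 a (idHom K 1)
  let w : Hom K (n + 2) n := tensor (idHom K n) (cupHom K)
  comp d w (comp d v u)

/-- The iterated conditional expectation `ε_{n,n+m} = ε_n ∘ ε_{n+1} ∘ ⋯ ∘ ε_{n+m-1} :
T_{n+m} → T_n`. -/
noncomputable def epsIter (d : K) (n : ℕ) : (m : ℕ) → Hom K (n + m) (n + m) → Hom K n n
  | 0, a => a
  | m + 1, a => epsIter d n m (eps d (n + m) a)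

/-! ### Tensor powers of cup and cap -/

/-- `∩^{⊗k} ∈ Hom(0, 2k)`. -/
noncomputable def capPow (K : Type) [Field K] : (k : ℕ) → Hom K 0 (2 * k)
  | 0 => idHom K 0
  | k + 1 => tensor (capPow K k) (capHom K)

/-- `∪^{⊗k} ∈ Hom(2k, 0)`. -/
noncomputable def cupPow (K : Type) [Field K] : (k : ℕ) → Hom K (2 * k) 0
  | 0 => idHom K 0
  | k + 1 => tensor (cupPow K k) (cupHom K)

/-! ### Ideals -/

/-- An ideal of the Temperley–Lieb category over `(K, d)`: a family of vector
subspaces `J m n ⊆ Hom K m n` closed under composition with arbitrary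
morphisms on either side and under tensor product with arbitrary morphisms on
either side. -/
structure IsIdeal (d : K) (J : ∀ m n : ℕ, Set (Hom K m n)) : Prop where
  zero_mem : ∀ m n : ℕ, (0 : Hom K m n) ∈ J m n
  add_mem : ∀ (m n : ℕ), ∀ x ∈ J m n, ∀ y ∈ J m n, x + y ∈ J m n
  smul_mem : ∀ (m n : ℕ) (c : K), ∀ x ∈ J m n, c • x ∈ J m n
  comp_mem_left : ∀ {l m n : ℕ} (b : Hom K m n) (a : Hom K l m),
    a ∈ J l m → comp d b a ∈ J l n
  comp_mem_right : ∀ {l m n : ℕ} (b : Hom K m n) (a : Hom K l m),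
    b ∈ J m n → comp d b a ∈ J l n
  tensor_mem_left : ∀ {m n m' n' : ℕ} (x : Hom K m n) (y : Hom K m' n'),
    x ∈ J m n → tensor x y ∈ J (m + m') (n + n')
  tensor_mem_right : ∀ {m n m' n' : ℕ} (x : Hom K m n) (y : Hom K m' n'),
    y ∈ J m' n' → tensor x y ∈ J (m + m') (n + n')

/-- An ideal is nonzero if some `J m n` contains a nonzero morphism. -/
def IdealNonzero (J : ∀ m n : ℕ, Set (Hom K m n)) : Prop :=
  ∃ (m n : ℕ) (x : Hom K m n), x ∈ J m n ∧ x ≠ 0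

/-- An ideal is proper if it does not contain all morphisms. -/
def IdealProper (J : ∀ m n : ℕ, Set (Hom K m n)) : Prop :=
  ∃ m n : ℕ, J m n ≠ Set.univ

/-- The negligible morphisms: `a ∈ Hom(m,n)` with `Tr_m (b ∘ a) = 0` for all
`b ∈ Hom(n,m)`. -/
def Negl (d : K) (m n : ℕ) : Set (Hom K m n) :=
  {a | ∀ b : Hom K n m, Tr d (comp d b a) = 0}

/-- The ideal generated by a morphism `x ∈ Hom K a b`: the smallest ideal
containing `x`, i.e. the intersection of all ideals containing `x`. -/
def genIdeal (d : K) {a b : ℕ} (x : Hom K a b) (m n : ℕ) : Set (Hom K m n) :=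
  {y | ∀ J : ∀ m' n' : ℕ, Set (Hom K m' n'), IsIdeal d J → x ∈ J a b → y ∈ J m n}

/-! ### Jones–Wenzl idempotents -/

/-- The diagram `E_i ∈ T_n` (here `i` is 0-indexed, `i + 1 < n`): it joins the
`i`-th and `(i+1)`-st top points, the `i`-th and `(i+1)`-st bottom points, and
joins the `j`-th top point vertically to the `j`-th bottom point for all other
`j`; encoded as a pairing function. -/
def eiPair (n i : ℕ) : Fin n ⊕ Fin n → Fin n ⊕ Fin n
  | Sum.inl j =>
      if (j : ℕ) = i then
        Sum.inl ⟨((j : ℕ) + 1) % n, Nat.mod_lt _ (Nat.lt_of_le_of_lt (Nat.zero_le _) j.isLt)⟩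
      else if (j : ℕ) = i + 1 then
        Sum.inl ⟨(j : ℕ) - 1, Nat.lt_of_le_of_lt (Nat.sub_le _ _) j.isLt⟩
      else Sum.inr j
  | Sum.inr j =>
      if (j : ℕ) = i then
        Sum.inr ⟨((j : ℕ) + 1) % n, Nat.mod_lt _ (Nat.lt_of_le_of_lt (Nat.zero_le _) j.isLt)⟩
      else if (j : ℕ) = i + 1 then
        Sum.inr ⟨(j : ℕ) - 1, Nat.lt_of_le_of_lt (Nat.sub_le _ _) j.isLt⟩
      else Sum.inl j

/-- The morphism `E_i ∈ T_n` (0-indexed `i`). -/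
noncomputable def EHom (K : Type) [Field K] (n i : ℕ) : Hom K n n :=
  fun c => if c.pair = eiPair n i then 1 else 0

/-- A Jones–Wenzl idempotent in `T_n`: a nonzero idempotent `p` with
`E_i ∘ p = p ∘ E_i = 0` for all `i` (1-indexed `1 ≤ i ≤ n-1`; here `i` is
0-indexed, so `i + 2 ≤ n`). -/
def IsJonesWenzl (d : K) (n : ℕ) (p : Hom K n n) : Prop :=
  p ≠ 0 ∧ comp d p p = p ∧
    ∀ i : ℕ, i + 2 ≤ n → comp d (EHom K n i) p = 0 ∧ comp d p (EHom K n i) = 0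

/-- The quantum integers `[k] ∈ K`: `[0] = 0`, `[1] = 1`,
`[k+1] = d·[k] − [k−1]`. -/
def qInt (d : K) : ℕ → K
  | 0 => 0
  | 1 => 1
  | k + 2 => d * qInt d (k + 1) - qInt d k




section Generic

lemma eqvGen_iff_mem {A : Type*} {r : A → A → Prop} {S : Set A}
    (hS : ∀ a b, r a b → (a ∈ S ↔ b ∈ S)) :
    ∀ {x y}, Relation.EqvGen r x y → (x ∈ S ↔ y ∈ S) := by
  intro x y h
  induction h with
  | rel a b h => exact hS a b h
  | refl a => exact Iff.rfl
  | symm a b _ ih => exact ih.symm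
  | trans a b c _ _ ih1 ih2 => exact ih1.trans ih2

noncomputable def quotEquivOfRel {A W : Type*} (sA : Setoid A) (sW : Setoid W) (π : A → W)
    (hsurj : Function.Surjective π)
    (h1 : ∀ a b, sA.r a b → sW.r (π a) (π b))
    (h2 : ∀ a b, sW.r (π a) (π b) → sA.r a b) :
    Quotient sA ≃ Quotient sW where
  toFun := Quotient.lift (fun a => (⟦π a⟧ : Quotient sW)) (fun a b h => Quotient.sound (h1 a b h))
  invFun := Quotient.lift (fun w => (⟦Function.surjInv hsurj w⟧ : Quotient sA))
    (fun u v h => Quotient.sound (h2 _ _ (by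
      rwa [Function.surjInv_eq hsurj u, Function.surjInv_eq hsurj v])))
  left_inv := by
    refine Quotient.ind (fun a => ?_)
    exact Quotient.sound (h2 _ _ (by rw [Function.surjInv_eq hsurj (π a)]))
  right_inv := by
    refine Quotient.ind (fun w => ?_)
    have : π (Function.surjInv hsurj w) = w := Function.surjInv_eq hsurj w
    simp only [Quotient.lift_mk, this]

end Generic

section IntHelper

lemma int_helper (g k l : ℤ) (hk : ¬ g ∣ k) (hl : ¬ g ∣ l)
    (h1 : g ∣ 2*k ∨ g ∣ 2*k - 1) (h2 : g ∣ 2*l ∨ g ∣ 2*l - 1) : g ∣ k - l := by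
  have godd1 : ∀ a : ℤ, g ∣ 2*a - 1 → Odd g := by
    intro a ⟨s, hs⟩
    have : Odd (g * s) := ⟨a - 1, by linarith⟩
    exact (Int.odd_mul.mp this).1
  have gcancel : ∀ a : ℤ, g ∣ 2 * a → Odd g → g ∣ a := by
    intro a ⟨t, ht⟩ hodd
    have : Even (g * t) := ⟨a, by linarith⟩
    rcases Int.even_mul.mp this with h | ⟨t', rfl⟩
    · exact absurd h (by simpa [Int.not_even_iff_odd] using hodd)
    · exact ⟨t', by linarith⟩
  rcases h1 with h1 | h1 <;> rcases h2 with h2 | h2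
  · -- both even type
    obtain ⟨t, ht⟩ := h1; obtain ⟨s, hs⟩ := h2
    rcases Int.even_or_odd t with ⟨t', rfl⟩ | ⟨t', rfl⟩
    · exact absurd ⟨t', by linarith⟩ hk
    rcases Int.even_or_odd s with ⟨s', rfl⟩ | ⟨s', rfl⟩
    · exact absurd ⟨s', by linarith⟩ hl
    refine ⟨t' - s', ?_⟩
    have h3 : (2:ℤ) * (k - l) = 2 * (g * (t' - s')) := by ring_nf; linarith
    exact mul_left_cancel₀ (by norm_num : (2:ℤ) ≠ 0) h3
  · exact absurd (gcancel k h1 (godd1 l h2)) hk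
  · exact absurd (gcancel l h2 (godd1 k h1)) hl
  · have hodd := godd1 k h1
    have : g ∣ 2*(k - l) := by
      have := Int.dvd_sub h1 h2
      have h4 : 2*k - 1 - (2*l - 1) = 2*(k-l) := by ring
      rwa [h4] at this
    exact gcancel _ this hodd

end IntHelper

section Dihedral

variable {V : Type*} {A B : Equiv.Perm V}

def dedge (A B : Equiv.Perm V) (x y : V) : Prop := A x = y ∨ B x = y

lemma dedge_symm (hA : Function.Involutive A) (hB : Function.Involutive B)
    {x y : V} (h : dedge A B x y) : dedge A B y x := by
  rcases h with h | h
  · exact Or.inl (by rw [← h, hA x])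
  · exact Or.inr (by rw [← h, hB x])

lemma zpow_conjA (hA : Function.Involutive A) (hB : Function.Involutive B) (k : ℤ) :
    A * (A * B) ^ k = (A * B) ^ (-k) * A := by
  have hA2 : A * A = 1 := Equiv.ext fun v => hA v
  have hB2 : B * B = 1 := Equiv.ext fun v => hB v
  have hAinv : A⁻¹ = A := inv_eq_of_mul_eq_one_left hA2
  have hBinv : B⁻¹ = B := inv_eq_of_mul_eq_one_left hB2
  have key : (A * B) ^ (-k) = A * (A * B) ^ k * A⁻¹ := by
    rw [← conj_zpow, zpow_neg, ← inv_zpow]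
    congr 1
    rw [hAinv, mul_inv_rev, hAinv, hBinv, ← mul_assoc, hA2, one_mul]
  rw [key, mul_assoc, hAinv, hA2, mul_one]

lemma zpow_conjB (hA : Function.Involutive A) (hB : Function.Involutive B) (k : ℤ) :
    B * (A * B) ^ k = (A * B) ^ (-k) * B := by
  have hA2 : A * A = 1 := Equiv.ext fun v => hA v
  have hB2 : B * B = 1 := Equiv.ext fun v => hB v
  have hAinv : A⁻¹ = A := inv_eq_of_mul_eq_one_left hA2
  have hBinv : B⁻¹ = B := inv_eq_of_mul_eq_one_left hB2
  have key : (A * B) ^ (-k) = B * (A * B) ^ k * B⁻¹ := by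
    rw [← conj_zpow, zpow_neg, ← inv_zpow]
    congr 1
    rw [hBinv, mul_inv_rev, hAinv, hBinv]
    calc (B * A : Equiv.Perm V) = B * A * (B * B) := by rw [hB2, mul_one]
    _ = B * (A * B) * B := by rw [mul_assoc, mul_assoc, mul_assoc]
  rw [key, mul_assoc, hBinv, hB2, mul_one]

end Dihedral

section Dihedral2

variable {V : Type*} {A B : Equiv.Perm V}

/-- stabilizer of x under powers of ρ = A*B -/
def dstab (A B : Equiv.Perm V) (x : V) : AddSubgroup ℤ where
  carrier := {k : ℤ | ((A*B) ^ k) x = x}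
  zero_mem' := by simp
  add_mem' := by
    intro a b ha hb
    simp only [Set.mem_setOf_eq] at *
    rw [add_comm, zpow_add, Equiv.Perm.mul_apply, ha, hb]
  neg_mem' := by
    intro a ha
    simp only [Set.mem_setOf_eq] at *
    conv_lhs => rw [← ha]
    rw [← Equiv.Perm.mul_apply, ← zpow_add, neg_add_cancel, zpow_zero, Equiv.Perm.one_apply]

lemma zpow_split (A B : Equiv.Perm V) (x : V) (t s : ℤ) :
    ((A*B) ^ (t+s)) x = ((A*B)^t) (((A*B)^s) x) := by
  rw [zpow_add, Equiv.Perm.mul_apply]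

lemma dstab_eq_iff {x : V} (a b : ℤ) :
    ((A*B) ^ a) x = ((A*B) ^ b) x ↔ a - b ∈ dstab A B x := by
  constructor
  · intro h
    show ((A*B) ^ (a-b)) x = x
    have e : a - b = -b + a := by ring
    rw [e, zpow_split, h, ← zpow_split]
    simp
  · intro h
    have h2 : ((A*B)^(a-b)) x = x := h
    have e : a = b + (a - b) := by ring
    rw [e, zpow_split, h2]

variable (hA : Function.Involutive A) (hB : Function.Involutive B)

include hA hB

lemma apply_A_zpow {x : V} (hx : B x = x) (k : ℤ) :
    A (((A*B) ^ k) x) = ((A*B) ^ (1-k)) x := by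
  have h1 : A (((A*B) ^ k) x) = ((A*B) ^ (-k)) (A x) := by
    rw [← Equiv.Perm.mul_apply, zpow_conjA hA hB, Equiv.Perm.mul_apply]
  have h2 : A x = ((A*B)^(1:ℤ)) x := by
    rw [zpow_one, Equiv.Perm.mul_apply, hx]
  rw [h1, h2, ← Equiv.Perm.mul_apply, ← zpow_add]
  congr 1; ring

lemma apply_B_zpow {x : V} (hx : B x = x) (k : ℤ) :
    B (((A*B) ^ k) x) = ((A*B) ^ (-k)) x := by
  rw [← Equiv.Perm.mul_apply, zpow_conjB hA hB, Equiv.Perm.mul_apply, hx]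

/-- L1: trajectory characterization of the component of a B-fixed point. -/
lemma conn_iff_zpow {x : V} (hx : B x = x) (y : V) :
    Relation.EqvGen (dedge A B) x y ↔ ∃ k : ℤ, ((A*B) ^ k) x = y := by
  constructor
  · intro h
    have hmem := eqvGen_iff_mem (S := {y | ∃ k : ℤ, ((A*B) ^ k) x = y}) ?_ h
    · exact hmem.mp ⟨0, by simp⟩
    · intro a b hab
      constructor
      · rintro ⟨k, rfl⟩
        rcases hab with hab | hab
        · exact ⟨1-k, by rw [← apply_A_zpow hA hB hx, hab]⟩
        · exact ⟨-k, by rw [← apply_B_zpow hA hB hx, hab]⟩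
      · rintro ⟨k, rfl⟩
        rcases hab with hab | hab
        · exact ⟨1-k, by rw [← apply_A_zpow hA hB hx k, ← hab, hA a]⟩
        · exact ⟨-k, by rw [← apply_B_zpow hA hB hx k, ← hab, hB a]⟩
  · rintro ⟨k, rfl⟩
    have step1 : ∀ v : V, Relation.EqvGen (dedge A B) v ((A*B) v) := by
      intro v
      refine Relation.EqvGen.trans _ (B v) _ (Relation.EqvGen.rel _ _ (Or.inr rfl)) ?_
      exact Relation.EqvGen.rel _ _ (Or.inl rfl)
    have step2 : ∀ v : V, Relation.EqvGen (dedge A B) v ((A*B)⁻¹ v) := by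
      intro v
      refine Relation.EqvGen.trans _ (A v) _ (Relation.EqvGen.rel _ _ (Or.inl rfl)) ?_
      have : (A*B)⁻¹ v = B (A v) := by
        have hAinv : A⁻¹ = A := inv_eq_of_mul_eq_one_left (Equiv.ext fun v => hA v)
        have hBinv : B⁻¹ = B := inv_eq_of_mul_eq_one_left (Equiv.ext fun v => hB v)
        rw [mul_inv_rev, hAinv, hBinv, Equiv.Perm.mul_apply]
      rw [this]
      exact Relation.EqvGen.rel _ _ (Or.inr rfl)
    induction k using Int.induction_on with
    | zero => simpa using Relation.EqvGen.refl x
    | succ i ih =>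
        have e : (i:ℤ)+1 = 1 + i := by ring
        have h2 : ((A*B) ^ ((i:ℤ)+1)) x = (A*B) (((A*B)^(i:ℤ)) x) := by
          rw [e, zpow_split, zpow_one]
        rw [h2]
        exact Relation.EqvGen.trans _ _ _ ih (step1 _)
    | pred i ih =>
        have e : -(i:ℤ)-1 = (-1) + (-(i:ℤ)) := by ring
        have h2 : ((A*B) ^ (-(i:ℤ)-1)) x = (A*B)⁻¹ (((A*B)^(-(i:ℤ))) x) := by
          rw [e, zpow_split, zpow_neg_one]
        rw [h2]
        exact Relation.EqvGen.trans _ _ _ ih (step2 _)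

end Dihedral2

section Dihedral3

variable {V : Type*} {A B : Equiv.Perm V}
variable (hA : Function.Involutive A) (hB : Function.Involutive B)

include hA hB

/-- Uniqueness of the outer partner. -/
lemma outer_unique {x : V} (hx : B x = x) {y z : V}
    (hy : Relation.EqvGen (dedge A B) x y) (hz : Relation.EqvGen (dedge A B) x z)
    (hyO : A y = y ∨ B y = y) (hzO : A z = z ∨ B z = z)
    (hy' : y ≠ x) (hz' : z ≠ x) : y = z := by
  obtain ⟨k, rfl⟩ := (conn_iff_zpow hA hB hx y).mp hy
  obtain ⟨l, rfl⟩ := (conn_iff_zpow hA hB hx z).mp hz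
  obtain ⟨g, hg⟩ := Int.subgroup_cyclic (dstab A B x)
  have hmem : ∀ j : ℤ, j ∈ dstab A B x ↔ g ∣ j := by
    intro j
    rw [hg, AddSubgroup.mem_closure_singleton]
    constructor
    · rintro ⟨t, rfl⟩; exact Dvd.intro t (by push_cast [zsmul_eq_mul]; ring)
    · rintro ⟨t, rfl⟩; exact ⟨t, by push_cast [zsmul_eq_mul]; ring⟩
  have hk : ¬ g ∣ k := by
    intro hdvd
    apply hy'
    have : ((A*B)^k) x = ((A*B)^(0:ℤ)) x := by
      rw [dstab_eq_iff, sub_zero, hmem]; exact hdvd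
    simpa using this
  have hl : ¬ g ∣ l := by
    intro hdvd
    apply hz'
    have : ((A*B)^l) x = ((A*B)^(0:ℤ)) x := by
      rw [dstab_eq_iff, sub_zero, hmem]; exact hdvd
    simpa using this
  have hky : g ∣ 2*k ∨ g ∣ 2*k - 1 := by
    rcases hyO with hfix | hfix
    · right
      rw [apply_A_zpow hA hB hx k, dstab_eq_iff, hmem] at hfix
      have : g ∣ -(2*k-1) := by convert hfix using 1; ring
      exact (Int.dvd_neg).mp this
    · left
      rw [apply_B_zpow hA hB hx k, dstab_eq_iff, hmem] at hfix
      have : g ∣ -(2*k) := by convert hfix using 1; ring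
      exact (Int.dvd_neg).mp this
  have hlz : g ∣ 2*l ∨ g ∣ 2*l - 1 := by
    rcases hzO with hfix | hfix
    · right
      rw [apply_A_zpow hA hB hx l, dstab_eq_iff, hmem] at hfix
      have : g ∣ -(2*l-1) := by convert hfix using 1; ring
      exact (Int.dvd_neg).mp this
    · left
      rw [apply_B_zpow hA hB hx l, dstab_eq_iff, hmem] at hfix
      have : g ∣ -(2*l) := by convert hfix using 1; ring
      exact (Int.dvd_neg).mp this
  rw [dstab_eq_iff, hmem]
  exact int_helper g k l hk hl hky hlz

/-- Existence of an outer partner. -/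
lemma outer_exists [Finite V] {x : V} (hx : B x = x) (hAx : A x ≠ x) :
    ∃ y : V, y ≠ x ∧ (A y = y ∨ B y = y) ∧ Relation.EqvGen (dedge A B) x y := by
  obtain ⟨g, hg⟩ := Int.subgroup_cyclic (dstab A B x)
  have hmem : ∀ j : ℤ, j ∈ dstab A B x ↔ g ∣ j := by
    intro j
    rw [hg, AddSubgroup.mem_closure_singleton]
    constructor
    · rintro ⟨t, rfl⟩; exact Dvd.intro t (by push_cast [zsmul_eq_mul]; ring)
    · rintro ⟨t, rfl⟩; exact ⟨t, by push_cast [zsmul_eq_mul]; ring⟩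
  have hgstab : g ∈ dstab A B x := (hmem g).mpr dvd_rfl
  -- g ≠ 0
  have hg0 : g ≠ 0 := by
    intro h0
    obtain ⟨a, b, hab, heq⟩ := Finite.exists_ne_map_eq_of_infinite
      (fun k : ℤ => ((A*B)^k) x)
    have := (dstab_eq_iff (A := A) (B := B) a b).mp heq
    rw [hmem, h0] at this
    exact hab (by omega)
  -- ρ x ≠ x  (since A x ≠ x and A x = ρ x)
  have hrx : ¬ (1:ℤ) ∈ dstab A B x := by
    intro h1
    apply hAx
    have : ((A*B)^(1:ℤ)) x = x := h1
    rw [zpow_one, Equiv.Perm.mul_apply, hx] at this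
    exact this
  have hg1 : g ≠ 1 ∧ g ≠ -1 := by
    constructor <;> intro h <;> apply hrx <;> rw [hmem, h] <;>
      first
        | exact one_dvd _
        | exact ⟨-1, by ring⟩
  rcases Int.even_or_odd g with ⟨h, rfl⟩ | ⟨h, rfl⟩
  · -- g = 2h even, partner is ρ^h x
    refine ⟨((A*B)^h) x, ?_, Or.inr ?_, (conn_iff_zpow hA hB hx _).mpr ⟨h, rfl⟩⟩
    · intro heq
      have : h - 0 ∈ dstab A B x := (dstab_eq_iff h 0).mp (by simpa using heq)
      rw [sub_zero, hmem] at this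
      obtain ⟨c, hc⟩ := this
      have h2 : h * (1 - 2*c) = 0 := by linarith [hc]
      rcases mul_eq_zero.mp h2 with h3 | h3
      · exact hg0 (by omega)
      · omega
    · rw [apply_B_zpow hA hB hx, dstab_eq_iff, hmem]
      exact ⟨-1, by ring⟩
  · -- g = 2h+1 odd, partner is ρ^(h+1) x
    refine ⟨((A*B)^(h+1)) x, ?_, Or.inl ?_, (conn_iff_zpow hA hB hx _).mpr ⟨h+1, rfl⟩⟩
    · intro heq
      have : h + 1 - 0 ∈ dstab A B x := (dstab_eq_iff (h+1) 0).mp (by simpa using heq)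
      rw [sub_zero, hmem] at this
      have hne : h + 1 ≠ 0 := by
        intro h0
        exact hg1.2 (by omega)
      have hle := Nat.le_of_dvd (Int.natAbs_pos.mpr hne)
        (Int.natAbs_dvd_natAbs.mpr this)
      omega
    · rw [apply_A_zpow hA hB hx, dstab_eq_iff, hmem]
      exact ⟨-1, by ring⟩

end Dihedral3

section Picture

lemma eqvGen_congr {A : Type*} {r s : A → A → Prop} (h : ∀ a b, r a b → Relation.EqvGen s a b) :
    ∀ {x y}, Relation.EqvGen r x y → Relation.EqvGen s x y := by
  intro x y hxy
  induction hxy with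
  | rel a b hab => exact h a b hab
  | refl a => exact Relation.EqvGen.refl a
  | symm a b _ ih => exact Relation.EqvGen.symm _ _ ih
  | trans a b c _ _ ih1 ih2 => exact Relation.EqvGen.trans _ _ _ ih1 ih2

variable {m n : ℕ}

/-- embedding of the top diagram's points -/
def iotaQ (m n : ℕ) : Fin m ⊕ Fin n → Pt m n m := Sum.map id Sum.inl

/-- embedding of the bottom diagram's points -/
def iotaP (m n : ℕ) : Fin n ⊕ Fin m → Pt m n m := Sum.inr

/-- embedding of the outer points -/
def embO (m n : ℕ) : Fin m ⊕ Fin m → Pt m n m := Sum.map id Sum.inr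

lemma iotaQ_inj : Function.Injective (iotaQ m n) :=
  Sum.map_injective.mpr ⟨fun _ _ h => h, Sum.inl_injective⟩

lemma iotaP_inj : Function.Injective (iotaP m n) := Sum.inr_injective

lemma embO_inj : Function.Injective (embO m n) :=
  Sum.map_injective.mpr ⟨fun _ _ h => h, Sum.inr_injective⟩

def alphF (Q : Diagram m n) : Pt m n m → Pt m n m
  | Sum.inl i => Sum.map id Sum.inl (Q.pair (Sum.inl i))
  | Sum.inr (Sum.inl j) => Sum.map id Sum.inl (Q.pair (Sum.inr j))
  | Sum.inr (Sum.inr i) => Sum.inr (Sum.inr i)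

def betaF (P : Diagram n m) : Pt m n m → Pt m n m
  | Sum.inl i => Sum.inl i
  | Sum.inr u => Sum.inr (P.pair u)

variable (Q : Diagram m n) (P : Diagram n m)

lemma alphF_iota (u : Fin m ⊕ Fin n) : alphF Q (iotaQ m n u) = iotaQ m n (Q.pair u) := by
  cases u <;> rfl

lemma betaF_iota (u : Fin n ⊕ Fin m) : betaF P (iotaP m n u) = iotaP m n (P.pair u) := rfl

lemma alphF_bottom (i : Fin m) : alphF Q (Sum.inr (Sum.inr i)) = Sum.inr (Sum.inr i) := rfl

lemma betaF_top (i : Fin m) : betaF P (Sum.inl i) = Sum.inl i := rfl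

lemma alphF_invol : Function.Involutive (alphF Q) := by
  intro v
  match v with
  | Sum.inl i =>
      rw [show (Sum.inl i : Pt m n m) = iotaQ m n (Sum.inl i) from rfl, alphF_iota, alphF_iota,
        Q.involutive]
  | Sum.inr (Sum.inl j) =>
      rw [show (Sum.inr (Sum.inl j) : Pt m n m) = iotaQ m n (Sum.inr j) from rfl, alphF_iota,
        alphF_iota, Q.involutive]
  | Sum.inr (Sum.inr i) => rfl

lemma betaF_invol : Function.Involutive (betaF P) := by
  intro v
  match v with
  | Sum.inl i => rfl
  | Sum.inr u => show Sum.inr (P.pair (P.pair u)) = _; rw [P.involutive]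

/-- the permutations -/
def alphaPerm : Equiv.Perm (Pt m n m) := (alphF_invol Q).toPerm _

def betaPerm : Equiv.Perm (Pt m n m) := (betaF_invol P).toPerm _

@[simp] lemma alphaPerm_apply (v : Pt m n m) : alphaPerm Q v = alphF Q v := rfl
@[simp] lemma betaPerm_apply (v : Pt m n m) : betaPerm P v = betaF P v := rfl

lemma alphaPerm_invol : Function.Involutive (alphaPerm Q) := alphF_invol Q
lemma betaPerm_invol : Function.Involutive (betaPerm P) := betaF_invol P

/-- Step and dedge generate the same equivalence -/
lemma step_iff_dedge (x y : Pt m n m) :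
    Step Q P x y → dedge (alphaPerm Q) (betaPerm P) x y := by
  rintro (⟨u, rfl, rfl⟩ | ⟨u, rfl, rfl⟩)
  · exact Or.inl (alphF_iota Q u)
  · exact Or.inr rfl

lemma dedge_imp_step (x y : Pt m n m) :
    dedge (alphaPerm Q) (betaPerm P) x y → Step Q P x y ∨ x = y := by
  rintro (h | h)
  · match x with
    | Sum.inl i => exact Or.inl (Or.inl ⟨Sum.inl i, rfl, h⟩)
    | Sum.inr (Sum.inl j) => exact Or.inl (Or.inl ⟨Sum.inr j, rfl, h⟩)
    | Sum.inr (Sum.inr i) => exact Or.inr h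
  · match x with
    | Sum.inl i => exact Or.inr h
    | Sum.inr u => exact Or.inl (Or.inr ⟨u, rfl, h⟩)

lemma conn_iff_dedge (x y : Pt m n m) :
    Conn Q P x y ↔ Relation.EqvGen (dedge (alphaPerm Q) (betaPerm P)) x y := by
  constructor
  · exact eqvGen_congr (fun a b hab => Relation.EqvGen.rel _ _ (step_iff_dedge Q P a b hab))
  · refine eqvGen_congr (fun a b hab => ?_)
    rcases dedge_imp_step Q P a b hab with h | rfl
    · exact Relation.EqvGen.rel _ _ h
    · exact Relation.EqvGen.refl a

/-- fixed points of alpha are exactly the bottom points -/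
lemma alphF_fix_iff (v : Pt m n m) : alphF Q v = v ↔ ∃ i, v = Sum.inr (Sum.inr i) := by
  constructor
  · intro h
    match v with
    | Sum.inl i =>
        exfalso
        rcases hq : Q.pair (Sum.inl i) with i' | j' <;>
          rw [show alphF Q (Sum.inl i) = Sum.map id Sum.inl (Q.pair (Sum.inl i)) from rfl, hq] at h
        · simp only [Sum.map_inl, id_eq, Sum.inl.injEq] at h
          exact Q.fixedPointFree (Sum.inl i) (by rw [hq, h])
        · simp at h
    | Sum.inr (Sum.inl j) =>
        exfalso
        rcases hq : Q.pair (Sum.inr j) with i' | j' <;>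
          rw [show alphF Q (Sum.inr (Sum.inl j)) = Sum.map id Sum.inl (Q.pair (Sum.inr j))
            from rfl, hq] at h
        · simp at h
        · simp only [Sum.map_inr, Sum.inr.injEq, Sum.inl.injEq] at h
          exact Q.fixedPointFree (Sum.inr j) (by rw [hq, h])
    | Sum.inr (Sum.inr i) => exact ⟨i, rfl⟩
  · rintro ⟨i, rfl⟩; rfl

lemma betaF_fix_iff (v : Pt m n m) : betaF P v = v ↔ ∃ i, v = Sum.inl i := by
  constructor
  · intro h
    match v with
    | Sum.inl i => exact ⟨i, rfl⟩
    | Sum.inr u =>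
        exfalso
        have : P.pair u = u := by
          have := h
          simp only [betaF, Sum.inr.injEq] at this
          exact this
        exact P.fixedPointFree u this
  · rintro ⟨i, rfl⟩; rfl

lemma outer_iff (v : Pt m n m) :
    (alphF Q v = v ∨ betaF P v = v) ↔ ∃ z, embO m n z = v := by
  rw [alphF_fix_iff, betaF_fix_iff]
  constructor
  · rintro (⟨i, rfl⟩ | ⟨i, rfl⟩)
    · exact ⟨Sum.inr i, rfl⟩
    · exact ⟨Sum.inl i, rfl⟩
  · rintro ⟨z, rfl⟩
    match z with
    | Sum.inl i => exact Or.inr ⟨i, rfl⟩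
    | Sum.inr i => exact Or.inl ⟨i, rfl⟩

/-- existence and uniqueness of the outer partner -/
lemma partner_exu (z : Fin m ⊕ Fin m) :
    ∃! y : Fin m ⊕ Fin m, y ≠ z ∧ Conn Q P (embO m n z) (embO m n y) := by
  classical
  have hAinv := alphaPerm_invol Q
  have hBinv := betaPerm_invol P
  -- two cases according to top/bottom
  have key : ∃ y : Pt m n m, y ≠ embO m n z ∧ (alphF Q y = y ∨ betaF P y = y) ∧
      Relation.EqvGen (dedge (alphaPerm Q) (betaPerm P)) (embO m n z) y := by
    match z with
    | Sum.inl i =>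
        have hfix : betaPerm P (embO m n (Sum.inl i)) = embO m n (Sum.inl i) := rfl
        have hnfix : alphaPerm Q (embO m n (Sum.inl i)) ≠ embO m n (Sum.inl i) := by
          intro h
          simp only [alphaPerm_apply] at h
          rcases (alphF_fix_iff Q _).mp h with ⟨i', hi⟩
          exact Sum.inl_ne_inr hi
        obtain ⟨y, h1, h2, h3⟩ := outer_exists hAinv hBinv hfix hnfix
        exact ⟨y, h1, h2, h3⟩
    | Sum.inr i =>
        have hfix : alphaPerm Q (embO m n (Sum.inr i)) = embO m n (Sum.inr i) := rfl
        have hnfix : betaPerm P (embO m n (Sum.inr i)) ≠ embO m n (Sum.inr i) := by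
          intro h
          simp only [betaPerm_apply] at h
          rcases (betaF_fix_iff P _).mp h with ⟨i', hi⟩
          exact Sum.inl_ne_inr hi.symm
        obtain ⟨y, h1, h2, h3⟩ := outer_exists hBinv hAinv hfix (by exact hnfix)
        refine ⟨y, h1, h2.symm, ?_⟩
        exact eqvGen_congr (fun a b hab => Relation.EqvGen.rel _ _ (Or.symm hab)) h3
  obtain ⟨y, hy1, hy2, hy3⟩ := key
  obtain ⟨w, rfl⟩ := (outer_iff Q P y).mp hy2
  refine ⟨w, ⟨fun h => hy1 (by rw [h]), (conn_iff_dedge Q P _ _).mpr hy3⟩, ?_⟩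
  -- uniqueness
  intro w' ⟨hw'1, hw'2⟩
  apply embO_inj (m := m) (n := n)
  have h2' := (conn_iff_dedge Q P _ _).mp hw'2
  have hout : ∀ u : Fin m ⊕ Fin m, alphaPerm Q (embO m n u) = embO m n u ∨
      betaPerm P (embO m n u) = embO m n u :=
    fun u => ((outer_iff Q P (embO m n u)).mpr ⟨u, rfl⟩)
  match z with
  | Sum.inl i =>
      exact outer_unique hAinv hBinv rfl h2' hy3 (hout w') hy2
        (fun h => hw'1 (embO_inj h)) (fun h => hy1 h)
  | Sum.inr i =>
      have flip : ∀ {a b}, Relation.EqvGen (dedge (alphaPerm Q) (betaPerm P)) a b →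
          Relation.EqvGen (dedge (betaPerm P) (alphaPerm Q)) a b :=
        fun h => eqvGen_congr (fun a b hab => Relation.EqvGen.rel _ _ (Or.symm hab)) h
      exact outer_unique hBinv hAinv rfl (flip h2') (flip hy3)
        (Or.symm (hout w')) (Or.symm hy2)
        (fun h => hw'1 (embO_inj h)) (fun h => hy1 h)

end Picture

section PartnerMap

variable {m n : ℕ} (Q : Diagram m n) (P : Diagram n m)

noncomputable def wmap (z : Fin m ⊕ Fin m) : Fin m ⊕ Fin m :=
  (partner_exu Q P z).exists.choose

lemma wmap_ne (z : Fin m ⊕ Fin m) : wmap Q P z ≠ z :=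
  (partner_exu Q P z).exists.choose_spec.1

lemma wmap_conn (z : Fin m ⊕ Fin m) :
    Conn Q P (embO m n z) (embO m n (wmap Q P z)) :=
  (partner_exu Q P z).exists.choose_spec.2

lemma wmap_uniq {z y : Fin m ⊕ Fin m} (h1 : y ≠ z)
    (h2 : Conn Q P (embO m n z) (embO m n y)) : y = wmap Q P z :=
  (partner_exu Q P z).unique ⟨h1, h2⟩ ⟨wmap_ne Q P z, wmap_conn Q P z⟩

lemma wmap_invol : Function.Involutive (wmap Q P) := by
  intro z
  refine (wmap_uniq Q P (y := z) (z := wmap Q P z) ?_ ?_).symm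
  · exact (wmap_ne Q P z).symm
  · exact Relation.EqvGen.symm _ _ (wmap_conn Q P z)

lemma conn_emb_iff (z y : Fin m ⊕ Fin m) :
    Conn Q P (embO m n z) (embO m n y) ↔ y = z ∨ y = wmap Q P z := by
  constructor
  · intro h
    by_cases hy : y = z
    · exact Or.inl hy
    · exact Or.inr (wmap_uniq Q P hy h)
  · rintro (rfl | rfl)
    · exact Relation.EqvGen.refl _
    · exact wmap_conn Q P z

end PartnerMap

section Fmachinery

/-- indicator in `ZMod 2` -/
noncomputable def chi (c : Prop) : ZMod 2 := if c then 1 else 0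

lemma chi_pos {c : Prop} (h : c) : chi c = 1 := if_pos h
lemma chi_neg {c : Prop} (h : ¬ c) : chi c = 0 := if_neg h

variable {m n : ℕ}

/-- the crossing form -/
def fV : Pt m n m → Pt m n m → ZMod 2
  | Sum.inl i, Sum.inl k => if (i:ℕ) < (k:ℕ) then 1 else 0
  | Sum.inl _, Sum.inr (Sum.inl _) => 1
  | Sum.inl _, Sum.inr (Sum.inr _) => 1
  | Sum.inr (Sum.inl _), Sum.inl _ => 0
  | Sum.inr (Sum.inl j), Sum.inr (Sum.inl k) => if (k:ℕ) < (j:ℕ) then 1 else 0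
  | Sum.inr (Sum.inl _), Sum.inr (Sum.inr _) => 0
  | Sum.inr (Sum.inr _), Sum.inl _ => 1
  | Sum.inr (Sum.inr _), Sum.inr (Sum.inl _) => 1
  | Sum.inr (Sum.inr i), Sum.inr (Sum.inr k) => if (i:ℕ) < (k:ℕ) then 1 else 0

/-- the mid-mid comparison form -/
def cmpV : Pt m n m → Pt m n m → ZMod 2
  | Sum.inr (Sum.inl j), Sum.inr (Sum.inl k) => if (k:ℕ) < (j:ℕ) then 1 else 0
  | _, _ => 0

/-- reversed boundary order for the bottom diagram -/
def pordR (m n : ℕ) : Fin n ⊕ Fin m → ℕ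
  | Sum.inl j => n + m - 1 - (j:ℕ)
  | Sum.inr i => (i:ℕ)

lemma bIdx_inj (a b : ℕ) : Function.Injective (bIdx a b) := by
  rintro (i | i) (k | k) h <;> simp only [bIdx] at h
  · exact congrArg Sum.inl (Fin.ext h)
  · exact absurd h (by have := i.isLt; have := k.isLt; omega)
  · exact absurd h (by have := i.isLt; have := k.isLt; omega)
  · exact congrArg Sum.inr (Fin.ext (by have := i.isLt; have := k.isLt; omega))

lemma pordR_inj : Function.Injective (pordR m n) := by
  rintro (j | j) (k | k) h <;> simp only [pordR] at h
  · exact congrArg Sum.inl (Fin.ext (by have := j.isLt; have := k.isLt; omega))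
  · exact absurd h (by have := j.isLt; have := k.isLt; omega)
  · exact absurd h (by have := j.isLt; have := k.isLt; omega)
  · exact congrArg Sum.inr (Fin.ext h)

lemma pordR_add_bIdx (u : Fin n ⊕ Fin m) : pordR m n u + bIdx n m u = n + m - 1 := by
  rcases u with j | i <;> simp only [pordR, bIdx] <;>
    [skip; skip] <;> [have := j.isLt; have := i.isLt] <;> omega

/-- the reversed noncrossing property for the bottom diagram -/
lemma ncP (P : Diagram n m) : ∀ x y, ¬ (pordR m n x < pordR m n y ∧
    pordR m n y < pordR m n (P.pair x) ∧ pordR m n (P.pair x) < pordR m n (P.pair y)) := by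
  intro x y ⟨h1, h2, h3⟩
  apply P.noncrossing (P.pair y) (P.pair x)
  rw [P.involutive, P.involutive]
  have e1 := pordR_add_bIdx (m := m) (n := n) x
  have e2 := pordR_add_bIdx (m := m) (n := n) y
  have e3 := pordR_add_bIdx (m := m) (n := n) (P.pair x)
  have e4 := pordR_add_bIdx (m := m) (n := n) (P.pair y)
  omega

lemma fV_iotaQ (a b : Fin m ⊕ Fin n) :
    fV (iotaQ m n a) (iotaQ m n b) = if bIdx m n a < bIdx m n b then 1 else 0 := by
  rcases a with i | j <;> rcases b with k | l <;>
    simp only [iotaQ, Sum.map_inl, Sum.map_inr, id_eq, fV, bIdx] <;>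
    split_ifs <;> first
      | rfl
      | (simp only [*, if_true, if_false]; done)
      | (exfalso; first
          | omega
          | (have := i.isLt; have := k.isLt; omega)
          | (have := i.isLt; have := l.isLt; omega)
          | (have := j.isLt; have := k.isLt; omega)
          | (have := j.isLt; have := l.isLt; omega))

lemma fV_iotaP (a b : Fin n ⊕ Fin m) :
    fV (iotaP m n a) (iotaP m n b) = if pordR m n a < pordR m n b then 1 else 0 := by
  rcases a with j | i <;> rcases b with l | k <;>
    simp only [iotaP, fV, pordR] <;>
    split_ifs <;> first
      | rfl
      | (simp only [*, if_true, if_false]; done)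
      | (exfalso; first
          | omega
          | (have := i.isLt; have := k.isLt; omega)
          | (have := i.isLt; have := l.isLt; omega)
          | (have := j.isLt; have := k.isLt; omega)
          | (have := j.isLt; have := l.isLt; omega))

/-- mixed identity: Q-point against P-point -/
lemma fV_mixed_QP (a : Fin m ⊕ Fin n) (c : Fin n ⊕ Fin m) :
    fV (iotaQ m n a) (iotaP m n c) =
      cmpV (iotaQ m n a) (iotaP m n c) + Sum.elim (fun _ => (1:ZMod 2)) (fun _ => 0) a := by
  rcases a with i | j <;> rcases c with l | k <;>
    simp [iotaQ, iotaP, fV, cmpV]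

lemma fV_mixed_PQ (c : Fin n ⊕ Fin m) (a : Fin m ⊕ Fin n) :
    fV (iotaP m n c) (iotaQ m n a) =
      cmpV (iotaP m n c) (iotaQ m n a) + Sum.elim (fun _ => (0:ZMod 2)) (fun _ => 1) c := by
  rcases c with l | k <;> rcases a with i | j <;>
    simp [iotaQ, iotaP, fV, cmpV]

/-- cmp vanishes unless both arguments are mid points -/
lemma cmpV_iotaQ_iotaP (a : Fin m ⊕ Fin n) (c : Fin n ⊕ Fin m) :
    cmpV (iotaQ m n a) (iotaP m n c) =
      Sum.elim (fun (_ : Fin m) => (0:ZMod 2))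
        (fun (j : Fin n) => Sum.elim (fun (k : Fin n) => if (k:ℕ) < (j:ℕ) then (1:ZMod 2) else 0)
        (fun (_ : Fin m) => (0:ZMod 2)) c) a := by
  rcases a with i | j <;> rcases c with l | k <;> simp [iotaQ, iotaP, cmpV]

lemma cmpV_iotaP_iotaQ (c : Fin n ⊕ Fin m) (a : Fin m ⊕ Fin n) :
    cmpV (iotaP m n c) (iotaQ m n a) =
      Sum.elim (fun (j : Fin n) => Sum.elim (fun (_ : Fin m) => (0:ZMod 2))
        (fun (k : Fin n) => if (k:ℕ) < (j:ℕ) then (1:ZMod 2) else 0) a)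
        (fun (_ : Fin m) => (0:ZMod 2)) c := by
  rcases c with l | k <;> rcases a with i | j <;> simp [iotaQ, iotaP, cmpV]

end Fmachinery

section SumMachinery

lemma foursum_zero {U : Type*} (σ : U → U) (o : U → ℕ)
    (hinj : Function.Injective o) (hinv : Function.Involutive σ)
    (hnc : ∀ x y, ¬ (o x < o y ∧ o y < o (σ x) ∧ o (σ x) < o (σ y)))
    (u v : U) (h1 : u ≠ v) (h2 : u ≠ σ v) (h3 : σ u ≠ v) (h4 : σ u ≠ σ v)
    (h5 : σ u ≠ u) (h6 : σ v ≠ v) :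
    ((if o u < o v then (1:ZMod 2) else 0) + (if o (σ u) < o v then 1 else 0)) +
      ((if o u < o (σ v) then 1 else 0) + (if o (σ u) < o (σ v) then 1 else 0)) = 0 := by
  have n1 := hnc u v
  have n2 := hnc v u
  have n3 := hnc u (σ v); rw [hinv v] at n3
  have n4 := hnc (σ v) u; rw [hinv v] at n4
  have n5 := hnc (σ u) v; rw [hinv u] at n5
  have n6 := hnc v (σ u); rw [hinv u] at n6
  have n7 := hnc (σ u) (σ v); rw [hinv u, hinv v] at n7
  have n8 := hnc (σ v) (σ u); rw [hinv u, hinv v] at n8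
  have d1 : o u ≠ o v := fun h => h1 (hinj h)
  have d2 : o u ≠ o (σ v) := fun h => h2 (hinj h)
  have d3 : o (σ u) ≠ o v := fun h => h3 (hinj h)
  have d4 : o (σ u) ≠ o (σ v) := fun h => h4 (hinj h)
  have d5 : o (σ u) ≠ o u := fun h => h5 (hinj h)
  have d6 : o (σ v) ≠ o v := fun h => h6 (hinj h)
  split_ifs <;> first | decide | (exfalso; omega)

lemma chi_split (c : Prop) (x y : ZMod 2) :
    chi c * (x + y) = chi c * x + chi c * y := mul_add _ _ _

/-- telescoping over the strands of one diagram inside a component -/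
lemma tele {U V' : Type*} [Fintype U] (σ : U → U) (hinv : Function.Involutive σ)
    (o : U → ℕ) (hinj : Function.Injective o) (hfpf : ∀ u, σ u ≠ u)
    (ι : U → V') (S : V' → Prop) (hS : ∀ u, S (ι (σ u)) ↔ S (ι u)) (G : V' → ZMod 2) :
    ∑ u : U, chi (S (ι u) ∧ o u < o (σ u)) * (G (ι u) + G (ι (σ u)))
      = ∑ u : U, chi (S (ι u)) * G (ι u) := by
  classical
  have expand : ∀ u : U, chi (S (ι u) ∧ o u < o (σ u)) * (G (ι u) + G (ι (σ u)))
      = chi (S (ι u) ∧ o u < o (σ u)) * G (ι u)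
        + chi (S (ι u) ∧ o u < o (σ u)) * G (ι (σ u)) := fun u => mul_add _ _ _
  rw [Finset.sum_congr rfl (fun u _ => expand u), Finset.sum_add_distrib]
  have reindex : ∑ u : U, chi (S (ι u) ∧ o u < o (σ u)) * G (ι (σ u))
      = ∑ u : U, chi (S (ι u) ∧ o (σ u) < o u) * G (ι u) := by
    apply Fintype.sum_equiv (hinv.toPerm σ)
    intro u
    simp only [Function.Involutive.coe_toPerm]
    rw [hinv u, hS u]
  rw [reindex, ← Finset.sum_add_distrib]
  apply Finset.sum_congr rfl
  intro u _
  rw [← add_mul]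
  congr 1
  by_cases hs : S (ι u)
  · have hne : o u ≠ o (σ u) := fun h => hfpf u (hinj h.symm)
    rcases lt_or_gt_of_ne hne with h | h
    · rw [chi_pos ⟨hs, h⟩, chi_pos hs, chi_neg (fun hc => by omega : ¬ (S (ι u) ∧ o (σ u) < o u)),
        add_zero]
    · rw [chi_pos (show S (ι u) ∧ o (σ u) < o u from ⟨hs, h⟩), chi_pos hs,
        chi_neg (fun hc => by omega : ¬ (S (ι u) ∧ o u < o (σ u))), zero_add]
  · rw [chi_neg (fun hc => hs hc.1), chi_neg (fun hc => hs hc.1), chi_neg hs, add_zero]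

end SumMachinery

section SumMachinery2

variable {m n : ℕ}

lemma vsum (S : Pt m n m → Prop) (G : Pt m n m → ZMod 2) :
    ∑ u : Fin m ⊕ Fin n, chi (S (iotaQ m n u)) * G (iotaQ m n u)
      + ∑ v : Fin n ⊕ Fin m, chi (S (iotaP m n v)) * G (iotaP m n v)
      = ∑ y : Fin m ⊕ Fin m, chi (S (embO m n y)) * G (embO m n y) := by
  rw [Fintype.sum_sum_type, Fintype.sum_sum_type, Fintype.sum_sum_type]
  have e1 : ∀ i : Fin m, iotaQ m n (Sum.inl i) = embO m n (Sum.inl i) := fun _ => rfl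
  have e2 : ∀ i : Fin m, iotaP m n (Sum.inr i) = embO m n (Sum.inr i) := fun _ => rfl
  have e3 : ∀ j : Fin n, iotaQ m n (Sum.inr j) = iotaP m n (Sum.inl j) := fun _ => rfl
  simp only [e1, e2, e3]
  have hM : (∑ j : Fin n, chi (S (iotaP m n (Sum.inl j))) * G (iotaP m n (Sum.inl j)))
      + (∑ j : Fin n, chi (S (iotaP m n (Sum.inl j))) * G (iotaP m n (Sum.inl j))) = 0 :=
    CharTwo.add_self_eq_zero _
  linear_combination hM

lemma outer_ind (Q : Diagram m n) (P : Diagram n m) (z : Fin m ⊕ Fin m)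
    (G : Pt m n m → ZMod 2) :
    ∑ y : Fin m ⊕ Fin m, chi (Conn Q P (embO m n z) (embO m n y)) * G (embO m n y)
      = G (embO m n z) + G (embO m n (wmap Q P z)) := by
  classical
  have key : ∀ y : Fin m ⊕ Fin m, chi (Conn Q P (embO m n z) (embO m n y)) * G (embO m n y)
      = (if y = z then G (embO m n y) else 0) + (if y = wmap Q P z then G (embO m n y) else 0) := by
    intro y
    by_cases h1 : y = z
    · subst h1
      rw [chi_pos (show Conn Q P (embO m n y) (embO m n y) from Relation.EqvGen.refl _), one_mul,
        if_pos rfl,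
        if_neg (fun h => wmap_ne Q P y (by rw [← h])), add_zero]
    · by_cases h2 : y = wmap Q P z
      · subst h2
        rw [chi_pos (wmap_conn Q P z), one_mul, if_neg h1, if_pos rfl, zero_add]
      · rw [chi_neg (fun hc => by rcases (conn_emb_iff Q P z y).mp hc with h | h <;> tauto),
          zero_mul, if_neg h1, if_neg h2, add_zero]
  rw [Finset.sum_congr rfl (fun y _ => key y), Finset.sum_add_distrib]
  rw [Finset.sum_ite_eq' Finset.univ z (fun y => G (embO m n y)),
    Finset.sum_ite_eq' Finset.univ (wmap Q P z) (fun y => G (embO m n y))]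
  simp

lemma dsum_one (z1 z2 z3 z4 : Fin m ⊕ Fin m)
    (h12 : bIdx m m z1 < bIdx m m z2) (h23 : bIdx m m z2 < bIdx m m z3)
    (h34 : bIdx m m z3 < bIdx m m z4) :
    (fV (m := m) (n := n) (embO m n z1) (embO m n z2) + fV (embO m n z1) (embO m n z4))
      + (fV (embO m n z3) (embO m n z2) + fV (embO m n z3) (embO m n z4)) = 1 := by
  rcases z1 with i1 | i1 <;> rcases z2 with i2 | i2 <;> rcases z3 with i3 | i3 <;>
    rcases z4 with i4 | i4 <;>
    simp only [embO, Sum.map_inl, Sum.map_inr, id_eq, fV, bIdx] at h12 h23 h34 ⊢ <;>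
    first
      | decide
      | (exfalso; have := i1.isLt; have := i2.isLt; have := i3.isLt; have := i4.isLt; omega)
      | (split_ifs <;>
          first
            | decide
            | (exfalso; have := i1.isLt; have := i2.isLt; have := i3.isLt; have := i4.isLt;
                omega))

/-- connectivity steps along strands -/
lemma conn_step_Q (Q : Diagram m n) (P : Diagram n m) (u : Fin m ⊕ Fin n) :
    Conn Q P (iotaQ m n u) (iotaQ m n (Q.pair u)) :=
  Relation.EqvGen.rel _ _ (Or.inl ⟨u, rfl, rfl⟩)

lemma conn_step_P (Q : Diagram m n) (P : Diagram n m) (u : Fin n ⊕ Fin m) :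
    Conn Q P (iotaP m n u) (iotaP m n (P.pair u)) :=
  Relation.EqvGen.rel _ _ (Or.inr ⟨u, rfl, rfl⟩)

lemma conn_closure_Q (Q : Diagram m n) (P : Diagram n m) (e : Pt m n m) (u : Fin m ⊕ Fin n) :
    Conn Q P e (iotaQ m n (Q.pair u)) ↔ Conn Q P e (iotaQ m n u) := by
  constructor <;> intro h
  · exact Relation.EqvGen.trans _ _ _ h
      (by rw [show iotaQ m n u = iotaQ m n (Q.pair (Q.pair u)) by rw [Q.involutive]]
          exact conn_step_Q Q P (Q.pair u))
  · exact Relation.EqvGen.trans _ _ _ h (conn_step_Q Q P u)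

lemma conn_closure_P (Q : Diagram m n) (P : Diagram n m) (e : Pt m n m) (u : Fin n ⊕ Fin m) :
    Conn Q P e (iotaP m n (P.pair u)) ↔ Conn Q P e (iotaP m n u) := by
  constructor <;> intro h
  · exact Relation.EqvGen.trans _ _ _ h
      (by rw [show iotaP m n u = iotaP m n (P.pair (P.pair u)) by rw [P.involutive]]
          exact conn_step_P Q P (P.pair u))
  · exact Relation.EqvGen.trans _ _ _ h (conn_step_P Q P u)

end SumMachinery2

section Noncross

variable {m n : ℕ}

set_option maxHeartbeats 2000000 in
theorem wmap_noncrossing (Q : Diagram m n) (P : Diagram n m) :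
    ∀ x y, ¬ (bIdx m m x < bIdx m m y ∧ bIdx m m y < bIdx m m (wmap Q P x) ∧
      bIdx m m (wmap Q P x) < bIdx m m (wmap Q P y)) := by
  intro z1 z2 ⟨h12, h23, h34⟩
  have hCD : ∀ v : Pt m n m, Conn Q P (embO m n z1) v → Conn Q P (embO m n z2) v → False := by
    intro v hc hd
    have hconn : Conn Q P (embO m n z1) (embO m n z2) :=
      Relation.EqvGen.trans _ _ _ hc (Relation.EqvGen.symm _ _ hd)
    rcases (conn_emb_iff Q P z1 z2).mp hconn with h | h
    · rw [h] at h12; omega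
    · rw [h] at h23; omega
  -- the row/column evaluation
  have rowcol : ∀ (G : Pt m n m → ZMod 2) (z : Fin m ⊕ Fin m),
      (∑ u : Fin m ⊕ Fin n, chi (Conn Q P (embO m n z) (iotaQ m n u) ∧
          bIdx m n u < bIdx m n (Q.pair u)) * (G (iotaQ m n u) + G (iotaQ m n (Q.pair u))))
      + (∑ v : Fin n ⊕ Fin m, chi (Conn Q P (embO m n z) (iotaP m n v) ∧
          pordR m n v < pordR m n (P.pair v)) * (G (iotaP m n v) + G (iotaP m n (P.pair v))))
      = G (embO m n z) + G (embO m n (wmap Q P z)) := by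
    intro G z
    rw [tele Q.pair Q.involutive (bIdx m n) (bIdx_inj m n) Q.fixedPointFree (iotaQ m n)
        (fun v => Conn Q P (embO m n z) v) (fun u => conn_closure_Q Q P _ u) G,
      tele P.pair P.involutive (pordR m n) pordR_inj P.fixedPointFree (iotaP m n)
        (fun v => Conn Q P (embO m n z) v) (fun u => conn_closure_P Q P _ u) G,
      vsum (fun v => Conn Q P (embO m n z) v) G, outer_ind Q P z G]
  -- the grand total, as an expression
  have eval1 :
    (∑ u : Fin m ⊕ Fin n, chi (Conn Q P (embO m n z1) (iotaQ m n u) ∧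
        bIdx m n u < bIdx m n (Q.pair u)) *
      ((∑ v : Fin m ⊕ Fin n, chi (Conn Q P (embO m n z2) (iotaQ m n v) ∧
          bIdx m n v < bIdx m n (Q.pair v)) *
        ((fV (iotaQ m n u) (iotaQ m n v) + fV (iotaQ m n (Q.pair u)) (iotaQ m n v)) +
         (fV (iotaQ m n u) (iotaQ m n (Q.pair v)) +
          fV (iotaQ m n (Q.pair u)) (iotaQ m n (Q.pair v)))))
       + (∑ w : Fin n ⊕ Fin m, chi (Conn Q P (embO m n z2) (iotaP m n w) ∧
          pordR m n w < pordR m n (P.pair w)) *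
        ((fV (iotaQ m n u) (iotaP m n w) + fV (iotaQ m n (Q.pair u)) (iotaP m n w)) +
         (fV (iotaQ m n u) (iotaP m n (P.pair w)) +
          fV (iotaQ m n (Q.pair u)) (iotaP m n (P.pair w)))))))
    + (∑ u' : Fin n ⊕ Fin m, chi (Conn Q P (embO m n z1) (iotaP m n u') ∧
        pordR m n u' < pordR m n (P.pair u')) *
      ((∑ v : Fin m ⊕ Fin n, chi (Conn Q P (embO m n z2) (iotaQ m n v) ∧
          bIdx m n v < bIdx m n (Q.pair v)) *
        ((fV (iotaP m n u') (iotaQ m n v) + fV (iotaP m n (P.pair u')) (iotaQ m n v)) +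
         (fV (iotaP m n u') (iotaQ m n (Q.pair v)) +
          fV (iotaP m n (P.pair u')) (iotaQ m n (Q.pair v)))))
       + (∑ w : Fin n ⊕ Fin m, chi (Conn Q P (embO m n z2) (iotaP m n w) ∧
          pordR m n w < pordR m n (P.pair w)) *
        ((fV (iotaP m n u') (iotaP m n w) + fV (iotaP m n (P.pair u')) (iotaP m n w)) +
         (fV (iotaP m n u') (iotaP m n (P.pair w)) +
          fV (iotaP m n (P.pair u')) (iotaP m n (P.pair w)))))))
    = 1 := by
    have hT1 : ∀ u : Fin m ⊕ Fin n,
        ((∑ v : Fin m ⊕ Fin n, chi (Conn Q P (embO m n z2) (iotaQ m n v) ∧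
            bIdx m n v < bIdx m n (Q.pair v)) *
          ((fV (iotaQ m n u) (iotaQ m n v) + fV (iotaQ m n (Q.pair u)) (iotaQ m n v)) +
           (fV (iotaQ m n u) (iotaQ m n (Q.pair v)) +
            fV (iotaQ m n (Q.pair u)) (iotaQ m n (Q.pair v)))))
         + (∑ w : Fin n ⊕ Fin m, chi (Conn Q P (embO m n z2) (iotaP m n w) ∧
            pordR m n w < pordR m n (P.pair w)) *
          ((fV (iotaQ m n u) (iotaP m n w) + fV (iotaQ m n (Q.pair u)) (iotaP m n w)) +
           (fV (iotaQ m n u) (iotaP m n (P.pair w)) +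
            fV (iotaQ m n (Q.pair u)) (iotaP m n (P.pair w))))))
        = (fV (iotaQ m n u) (embO m n z2) + fV (iotaQ m n u) (embO m n (wmap Q P z2)))
          + (fV (iotaQ m n (Q.pair u)) (embO m n z2)
             + fV (iotaQ m n (Q.pair u)) (embO m n (wmap Q P z2))) := by
      intro u
      have h := rowcol (fun y => fV (iotaQ m n u) y + fV (iotaQ m n (Q.pair u)) y) z2
      calc _ = (fV (iotaQ m n u) (embO m n z2) + fV (iotaQ m n (Q.pair u)) (embO m n z2))
          + (fV (iotaQ m n u) (embO m n (wmap Q P z2))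
             + fV (iotaQ m n (Q.pair u)) (embO m n (wmap Q P z2))) := h
      _ = _ := add_add_add_comm _ _ _ _
    have hT2 : ∀ u' : Fin n ⊕ Fin m,
        ((∑ v : Fin m ⊕ Fin n, chi (Conn Q P (embO m n z2) (iotaQ m n v) ∧
            bIdx m n v < bIdx m n (Q.pair v)) *
          ((fV (iotaP m n u') (iotaQ m n v) + fV (iotaP m n (P.pair u')) (iotaQ m n v)) +
           (fV (iotaP m n u') (iotaQ m n (Q.pair v)) +
            fV (iotaP m n (P.pair u')) (iotaQ m n (Q.pair v)))))
         + (∑ w : Fin n ⊕ Fin m, chi (Conn Q P (embO m n z2) (iotaP m n w) ∧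
            pordR m n w < pordR m n (P.pair w)) *
          ((fV (iotaP m n u') (iotaP m n w) + fV (iotaP m n (P.pair u')) (iotaP m n w)) +
           (fV (iotaP m n u') (iotaP m n (P.pair w)) +
            fV (iotaP m n (P.pair u')) (iotaP m n (P.pair w))))))
        = (fV (iotaP m n u') (embO m n z2) + fV (iotaP m n u') (embO m n (wmap Q P z2)))
          + (fV (iotaP m n (P.pair u')) (embO m n z2)
             + fV (iotaP m n (P.pair u')) (embO m n (wmap Q P z2))) := by
      intro u'
      have h := rowcol (fun y => fV (iotaP m n u') y + fV (iotaP m n (P.pair u')) y) z2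
      calc _ = (fV (iotaP m n u') (embO m n z2) + fV (iotaP m n (P.pair u')) (embO m n z2))
          + (fV (iotaP m n u') (embO m n (wmap Q P z2))
             + fV (iotaP m n (P.pair u')) (embO m n (wmap Q P z2))) := h
      _ = _ := add_add_add_comm _ _ _ _
    have h := rowcol (fun y => fV y (embO m n z2) + fV y (embO m n (wmap Q P z2))) z1
    calc _
        = (∑ u : Fin m ⊕ Fin n, chi (Conn Q P (embO m n z1) (iotaQ m n u) ∧
              bIdx m n u < bIdx m n (Q.pair u)) *
            ((fV (iotaQ m n u) (embO m n z2) + fV (iotaQ m n u) (embO m n (wmap Q P z2)))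
              + (fV (iotaQ m n (Q.pair u)) (embO m n z2)
                + fV (iotaQ m n (Q.pair u)) (embO m n (wmap Q P z2)))))
          + (∑ u' : Fin n ⊕ Fin m, chi (Conn Q P (embO m n z1) (iotaP m n u') ∧
              pordR m n u' < pordR m n (P.pair u')) *
            ((fV (iotaP m n u') (embO m n z2) + fV (iotaP m n u') (embO m n (wmap Q P z2)))
              + (fV (iotaP m n (P.pair u')) (embO m n z2)
                + fV (iotaP m n (P.pair u')) (embO m n (wmap Q P z2))))) := by
          congr 1
          · exact Finset.sum_congr rfl (fun u _ => by rw [hT1 u])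
          · exact Finset.sum_congr rfl (fun u' _ => by rw [hT2 u'])
    _ = (fV (embO m n z1) (embO m n z2) + fV (embO m n z1) (embO m n (wmap Q P z2)))
        + (fV (embO m n (wmap Q P z1)) (embO m n z2)
           + fV (embO m n (wmap Q P z1)) (embO m n (wmap Q P z2))) := h
    _ = 1 := dsum_one z1 z2 (wmap Q P z1) (wmap Q P z2) h12 h23 h34
  have eval2 :
    (∑ u : Fin m ⊕ Fin n, chi (Conn Q P (embO m n z1) (iotaQ m n u) ∧
        bIdx m n u < bIdx m n (Q.pair u)) *
      ((∑ v : Fin m ⊕ Fin n, chi (Conn Q P (embO m n z2) (iotaQ m n v) ∧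
          bIdx m n v < bIdx m n (Q.pair v)) *
        ((fV (iotaQ m n u) (iotaQ m n v) + fV (iotaQ m n (Q.pair u)) (iotaQ m n v)) +
         (fV (iotaQ m n u) (iotaQ m n (Q.pair v)) +
          fV (iotaQ m n (Q.pair u)) (iotaQ m n (Q.pair v)))))
       + (∑ w : Fin n ⊕ Fin m, chi (Conn Q P (embO m n z2) (iotaP m n w) ∧
          pordR m n w < pordR m n (P.pair w)) *
        ((fV (iotaQ m n u) (iotaP m n w) + fV (iotaQ m n (Q.pair u)) (iotaP m n w)) +
         (fV (iotaQ m n u) (iotaP m n (P.pair w)) +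
          fV (iotaQ m n (Q.pair u)) (iotaP m n (P.pair w)))))))
    + (∑ u' : Fin n ⊕ Fin m, chi (Conn Q P (embO m n z1) (iotaP m n u') ∧
        pordR m n u' < pordR m n (P.pair u')) *
      ((∑ v : Fin m ⊕ Fin n, chi (Conn Q P (embO m n z2) (iotaQ m n v) ∧
          bIdx m n v < bIdx m n (Q.pair v)) *
        ((fV (iotaP m n u') (iotaQ m n v) + fV (iotaP m n (P.pair u')) (iotaQ m n v)) +
         (fV (iotaP m n u') (iotaQ m n (Q.pair v)) +
          fV (iotaP m n (P.pair u')) (iotaQ m n (Q.pair v)))))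
       + (∑ w : Fin n ⊕ Fin m, chi (Conn Q P (embO m n z2) (iotaP m n w) ∧
          pordR m n w < pordR m n (P.pair w)) *
        ((fV (iotaP m n u') (iotaP m n w) + fV (iotaP m n (P.pair u')) (iotaP m n w)) +
         (fV (iotaP m n u') (iotaP m n (P.pair w)) +
          fV (iotaP m n (P.pair u')) (iotaP m n (P.pair w)))))))
    = 0 := by
    have h2 : ∀ x : ZMod 2, x + x = 0 := by decide
    have mixed4Q : ∀ (u : Fin m ⊕ Fin n) (w : Fin n ⊕ Fin m),
        ((fV (iotaQ m n (u)) (iotaP m n (w)) + fV (iotaQ m n (Q.pair u)) (iotaP m n (w))) +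
       (fV (iotaQ m n (u)) (iotaP m n (P.pair w)) + fV (iotaQ m n (Q.pair u)) (iotaP m n (P.pair w)))) = ((cmpV (iotaQ m n (u)) (iotaP m n (w)) + cmpV (iotaQ m n (Q.pair u)) (iotaP m n (w))) +
       (cmpV (iotaQ m n (u)) (iotaP m n (P.pair w)) + cmpV (iotaQ m n (Q.pair u)) (iotaP m n (P.pair w)))) := by
      intro u w
      rw [fV_mixed_QP, fV_mixed_QP, fV_mixed_QP, fV_mixed_QP]
      linear_combination h2 (Sum.elim (fun _ => (1:ZMod 2)) (fun _ => 0) u) +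
        h2 (Sum.elim (fun _ => (1:ZMod 2)) (fun _ => 0) (Q.pair u))
    have mixed4P : ∀ (u' : Fin n ⊕ Fin m) (v : Fin m ⊕ Fin n),
        ((fV (iotaP m n (u')) (iotaQ m n (v)) + fV (iotaP m n (P.pair u')) (iotaQ m n (v))) +
       (fV (iotaP m n (u')) (iotaQ m n (Q.pair v)) + fV (iotaP m n (P.pair u')) (iotaQ m n (Q.pair v)))) = ((cmpV (iotaP m n (u')) (iotaQ m n (v)) + cmpV (iotaP m n (P.pair u')) (iotaQ m n (v))) +
       (cmpV (iotaP m n (u')) (iotaQ m n (Q.pair v)) + cmpV (iotaP m n (P.pair u')) (iotaQ m n (Q.pair v)))) := by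
      intro u' v
      rw [fV_mixed_PQ, fV_mixed_PQ, fV_mixed_PQ, fV_mixed_PQ]
      linear_combination h2 (Sum.elim (fun _ => (0:ZMod 2)) (fun _ => 1) u') +
        h2 (Sum.elim (fun _ => (0:ZMod 2)) (fun _ => 1) (P.pair u'))
    have hA1 : (∑ u : Fin m ⊕ Fin n, chi (Conn Q P (embO m n z1) (iotaQ m n u) ∧ bIdx m n u < bIdx m n (Q.pair u)) *
    (∑ v : Fin m ⊕ Fin n, chi (Conn Q P (embO m n z2) (iotaQ m n v) ∧ bIdx m n v < bIdx m n (Q.pair v)) *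
      ((fV (iotaQ m n (u)) (iotaQ m n (v)) + fV (iotaQ m n (Q.pair u)) (iotaQ m n (v))) +
       (fV (iotaQ m n (u)) (iotaQ m n (Q.pair v)) + fV (iotaQ m n (Q.pair u)) (iotaQ m n (Q.pair v)))))) = 0 := by
      apply Finset.sum_eq_zero
      intro u _
      by_cases hc : Conn Q P (embO m n z1) (iotaQ m n u) ∧ bIdx m n u < bIdx m n (Q.pair u)
      · rw [chi_pos hc, one_mul]
        apply Finset.sum_eq_zero
        intro v _
        by_cases hd : Conn Q P (embO m n z2) (iotaQ m n v) ∧ bIdx m n v < bIdx m n (Q.pair v)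
        · rw [chi_pos hd, one_mul, fV_iotaQ, fV_iotaQ, fV_iotaQ, fV_iotaQ]
          have hc' : Conn Q P (embO m n z1) (iotaQ m n (Q.pair u)) :=
            (conn_closure_Q Q P _ u).mpr hc.1
          have hd' : Conn Q P (embO m n z2) (iotaQ m n (Q.pair v)) :=
            (conn_closure_Q Q P _ v).mpr hd.1
          refine foursum_zero Q.pair (bIdx m n) (bIdx_inj m n) Q.involutive Q.noncrossing u v
            ?_ ?_ ?_ ?_ (Q.fixedPointFree u) (Q.fixedPointFree v)
          · exact fun h => hCD _ (h ▸ hc.1) hd.1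
          · exact fun h => hCD _ (h ▸ hc.1) hd'
          · exact fun h => hCD _ (h ▸ hc') hd.1
          · exact fun h => hCD _ (h ▸ hc') hd'
        · rw [chi_neg hd, zero_mul]
      · rw [chi_neg hc, zero_mul]
    have hA4 : (∑ u' : Fin n ⊕ Fin m, chi (Conn Q P (embO m n z1) (iotaP m n u') ∧ pordR m n u' < pordR m n (P.pair u')) *
    (∑ w : Fin n ⊕ Fin m, chi (Conn Q P (embO m n z2) (iotaP m n w) ∧ pordR m n w < pordR m n (P.pair w)) *
      ((fV (iotaP m n (u')) (iotaP m n (w)) + fV (iotaP m n (P.pair u')) (iotaP m n (w))) +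
       (fV (iotaP m n (u')) (iotaP m n (P.pair w)) + fV (iotaP m n (P.pair u')) (iotaP m n (P.pair w)))))) = 0 := by
      apply Finset.sum_eq_zero
      intro u' _
      by_cases hc : Conn Q P (embO m n z1) (iotaP m n u') ∧ pordR m n u' < pordR m n (P.pair u')
      · rw [chi_pos hc, one_mul]
        apply Finset.sum_eq_zero
        intro w _
        by_cases hd : Conn Q P (embO m n z2) (iotaP m n w) ∧ pordR m n w < pordR m n (P.pair w)
        · rw [chi_pos hd, one_mul, fV_iotaP, fV_iotaP, fV_iotaP, fV_iotaP]
          have hc' : Conn Q P (embO m n z1) (iotaP m n (P.pair u')) :=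
            (conn_closure_P Q P _ u').mpr hc.1
          have hd' : Conn Q P (embO m n z2) (iotaP m n (P.pair w)) :=
            (conn_closure_P Q P _ w).mpr hd.1
          refine foursum_zero P.pair (pordR m n) pordR_inj P.involutive (ncP P) u' w
            ?_ ?_ ?_ ?_ (P.fixedPointFree u') (P.fixedPointFree w)
          · exact fun h => hCD _ (h ▸ hc.1) hd.1
          · exact fun h => hCD _ (h ▸ hc.1) hd'
          · exact fun h => hCD _ (h ▸ hc') hd.1
          · exact fun h => hCD _ (h ▸ hc') hd'
        · rw [chi_neg hd, zero_mul]
      · rw [chi_neg hc, zero_mul]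
    have hA2 : (∑ u : Fin m ⊕ Fin n, chi (Conn Q P (embO m n z1) (iotaQ m n u) ∧ bIdx m n u < bIdx m n (Q.pair u)) *
    (∑ w : Fin n ⊕ Fin m, chi (Conn Q P (embO m n z2) (iotaP m n w) ∧ pordR m n w < pordR m n (P.pair w)) *
      ((fV (iotaQ m n (u)) (iotaP m n (w)) + fV (iotaQ m n (Q.pair u)) (iotaP m n (w))) +
       (fV (iotaQ m n (u)) (iotaP m n (P.pair w)) + fV (iotaQ m n (Q.pair u)) (iotaP m n (P.pair w)))))) = (∑ j : Fin n, chi (Conn Q P (embO m n z1) (Sum.inr (Sum.inl j))) *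
    (∑ k : Fin n, chi (Conn Q P (embO m n z2) (Sum.inr (Sum.inl k))) *
      (if (k:ℕ) < (j:ℕ) then (1:ZMod 2) else 0))) := by
      calc (∑ u : Fin m ⊕ Fin n, chi (Conn Q P (embO m n z1) (iotaQ m n u) ∧ bIdx m n u < bIdx m n (Q.pair u)) *
    (∑ w : Fin n ⊕ Fin m, chi (Conn Q P (embO m n z2) (iotaP m n w) ∧ pordR m n w < pordR m n (P.pair w)) *
      ((fV (iotaQ m n (u)) (iotaP m n (w)) + fV (iotaQ m n (Q.pair u)) (iotaP m n (w))) +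
       (fV (iotaQ m n (u)) (iotaP m n (P.pair w)) + fV (iotaQ m n (Q.pair u)) (iotaP m n (P.pair w))))))
          = (∑ u : Fin m ⊕ Fin n, chi (Conn Q P (embO m n z1) (iotaQ m n u) ∧ bIdx m n u < bIdx m n (Q.pair u)) *
    (∑ w : Fin n ⊕ Fin m, chi (Conn Q P (embO m n z2) (iotaP m n w) ∧ pordR m n w < pordR m n (P.pair w)) *
      ((cmpV (iotaQ m n (u)) (iotaP m n (w)) + cmpV (iotaQ m n (Q.pair u)) (iotaP m n (w))) +
       (cmpV (iotaQ m n (u)) (iotaP m n (P.pair w)) + cmpV (iotaQ m n (Q.pair u)) (iotaP m n (P.pair w)))))) :=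
            Finset.sum_congr rfl (fun u _ => congrArg (fun t => chi (Conn Q P (embO m n z1) (iotaQ m n u) ∧ bIdx m n u < bIdx m n (Q.pair u)) * t)
              (Finset.sum_congr rfl (fun w _ => congrArg (fun s => chi (Conn Q P (embO m n z2) (iotaP m n w) ∧ pordR m n w < pordR m n (P.pair w)) * s)
                (mixed4Q u w))))
        _ = (∑ u : Fin m ⊕ Fin n, chi (Conn Q P (embO m n z1) (iotaQ m n u) ∧ bIdx m n u < bIdx m n (Q.pair u)) *
    (∑ w : Fin n ⊕ Fin m, chi (Conn Q P (embO m n z2) (iotaP m n (w))) *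
      (cmpV (iotaQ m n (u)) (iotaP m n (w)) + cmpV (iotaQ m n (Q.pair u)) (iotaP m n (w))))) :=
            Finset.sum_congr rfl (fun u _ => congrArg (fun t => chi (Conn Q P (embO m n z1) (iotaQ m n u) ∧ bIdx m n u < bIdx m n (Q.pair u)) * t)
              (tele P.pair P.involutive (pordR m n) pordR_inj P.fixedPointFree (iotaP m n)
                (fun y => Conn Q P (embO m n z2) y) (fun w => conn_closure_P Q P _ w)
                (fun y => cmpV (iotaQ m n (u)) y + cmpV (iotaQ m n (Q.pair u)) y)))
        _ = (∑ u : Fin m ⊕ Fin n, chi (Conn Q P (embO m n z1) (iotaQ m n u) ∧ bIdx m n u < bIdx m n (Q.pair u)) *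
    ((∑ w : Fin n ⊕ Fin m, chi (Conn Q P (embO m n z2) (iotaP m n (w))) * cmpV (iotaQ m n (u)) (iotaP m n (w)))
      + (∑ w : Fin n ⊕ Fin m, chi (Conn Q P (embO m n z2) (iotaP m n (w))) * cmpV (iotaQ m n (Q.pair u)) (iotaP m n (w))))) :=
            Finset.sum_congr rfl (fun u _ => congrArg (fun t => chi (Conn Q P (embO m n z1) (iotaQ m n u) ∧ bIdx m n u < bIdx m n (Q.pair u)) * t)
              ((Finset.sum_congr rfl (fun w _ => mul_add _ _ _)).trans
                Finset.sum_add_distrib))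
        _ = (∑ u : Fin m ⊕ Fin n, chi (Conn Q P (embO m n z1) (iotaQ m n (u))) *
    (∑ w : Fin n ⊕ Fin m, chi (Conn Q P (embO m n z2) (iotaP m n (w))) * cmpV (iotaQ m n (u)) (iotaP m n (w)))) :=
            tele Q.pair Q.involutive (bIdx m n) (bIdx_inj m n) Q.fixedPointFree (iotaQ m n)
              (fun y => Conn Q P (embO m n z1) y) (fun u => conn_closure_Q Q P _ u)
              (fun y => ∑ w : Fin n ⊕ Fin m, chi (Conn Q P (embO m n z2) (iotaP m n (w))) * cmpV y (iotaP m n (w)))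
        _ = (∑ j : Fin n, chi (Conn Q P (embO m n z1) (Sum.inr (Sum.inl j))) *
    (∑ k : Fin n, chi (Conn Q P (embO m n z2) (Sum.inr (Sum.inl k))) *
      (if (k:ℕ) < (j:ℕ) then (1:ZMod 2) else 0))) := by
            rw [Fintype.sum_sum_type]
            have hz : (∑ i : Fin m, chi (Conn Q P (embO m n z1) (iotaQ m n (Sum.inl i))) *
                (∑ w : Fin n ⊕ Fin m, chi (Conn Q P (embO m n z2) (iotaP m n (w))) * cmpV (iotaQ m n (Sum.inl i)) (iotaP m n (w)))) = 0 := by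
              apply Finset.sum_eq_zero
              intro i _
              have hin : (∑ w : Fin n ⊕ Fin m, chi (Conn Q P (embO m n z2) (iotaP m n (w))) * cmpV (iotaQ m n (Sum.inl i)) (iotaP m n (w))) = 0 := by
                apply Finset.sum_eq_zero
                intro w _
                have hc0 : cmpV (iotaQ m n (Sum.inl i)) (iotaP m n (w)) = 0 := by
                  rcases w with l | k <;> rfl
                rw [hc0, mul_zero]
              rw [hin, mul_zero]
            rw [hz, zero_add]
            apply Finset.sum_congr rfl
            intro j _
            congr 1
            rw [Fintype.sum_sum_type]
            have hz2 : (∑ k : Fin m, chi (Conn Q P (embO m n z2) (iotaP m n (Sum.inr k))) *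
                cmpV (iotaQ m n (Sum.inr j)) (iotaP m n (Sum.inr k))) = 0 := by
              apply Finset.sum_eq_zero
              intro k _
              rw [show cmpV (iotaQ m n (Sum.inr j)) (iotaP m n (Sum.inr k)) = 0 from rfl, mul_zero]
            rw [hz2, add_zero]
            rfl
    have hA3 : (∑ u' : Fin n ⊕ Fin m, chi (Conn Q P (embO m n z1) (iotaP m n u') ∧ pordR m n u' < pordR m n (P.pair u')) *
    (∑ v : Fin m ⊕ Fin n, chi (Conn Q P (embO m n z2) (iotaQ m n v) ∧ bIdx m n v < bIdx m n (Q.pair v)) *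
      ((fV (iotaP m n (u')) (iotaQ m n (v)) + fV (iotaP m n (P.pair u')) (iotaQ m n (v))) +
       (fV (iotaP m n (u')) (iotaQ m n (Q.pair v)) + fV (iotaP m n (P.pair u')) (iotaQ m n (Q.pair v)))))) = (∑ j : Fin n, chi (Conn Q P (embO m n z1) (Sum.inr (Sum.inl j))) *
    (∑ k : Fin n, chi (Conn Q P (embO m n z2) (Sum.inr (Sum.inl k))) *
      (if (k:ℕ) < (j:ℕ) then (1:ZMod 2) else 0))) := by
      calc (∑ u' : Fin n ⊕ Fin m, chi (Conn Q P (embO m n z1) (iotaP m n u') ∧ pordR m n u' < pordR m n (P.pair u')) *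
    (∑ v : Fin m ⊕ Fin n, chi (Conn Q P (embO m n z2) (iotaQ m n v) ∧ bIdx m n v < bIdx m n (Q.pair v)) *
      ((fV (iotaP m n (u')) (iotaQ m n (v)) + fV (iotaP m n (P.pair u')) (iotaQ m n (v))) +
       (fV (iotaP m n (u')) (iotaQ m n (Q.pair v)) + fV (iotaP m n (P.pair u')) (iotaQ m n (Q.pair v))))))
          = (∑ u' : Fin n ⊕ Fin m, chi (Conn Q P (embO m n z1) (iotaP m n u') ∧ pordR m n u' < pordR m n (P.pair u')) *
    (∑ v : Fin m ⊕ Fin n, chi (Conn Q P (embO m n z2) (iotaQ m n v) ∧ bIdx m n v < bIdx m n (Q.pair v)) *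
      ((cmpV (iotaP m n (u')) (iotaQ m n (v)) + cmpV (iotaP m n (P.pair u')) (iotaQ m n (v))) +
       (cmpV (iotaP m n (u')) (iotaQ m n (Q.pair v)) + cmpV (iotaP m n (P.pair u')) (iotaQ m n (Q.pair v)))))) :=
            Finset.sum_congr rfl (fun u' _ => congrArg (fun t => chi (Conn Q P (embO m n z1) (iotaP m n u') ∧ pordR m n u' < pordR m n (P.pair u')) * t)
              (Finset.sum_congr rfl (fun v _ => congrArg (fun s => chi (Conn Q P (embO m n z2) (iotaQ m n v) ∧ bIdx m n v < bIdx m n (Q.pair v)) * s)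
                (mixed4P u' v))))
        _ = (∑ u' : Fin n ⊕ Fin m, chi (Conn Q P (embO m n z1) (iotaP m n u') ∧ pordR m n u' < pordR m n (P.pair u')) *
    (∑ v : Fin m ⊕ Fin n, chi (Conn Q P (embO m n z2) (iotaQ m n (v))) *
      (cmpV (iotaP m n (u')) (iotaQ m n (v)) + cmpV (iotaP m n (P.pair u')) (iotaQ m n (v))))) :=
            Finset.sum_congr rfl (fun u' _ => congrArg (fun t => chi (Conn Q P (embO m n z1) (iotaP m n u') ∧ pordR m n u' < pordR m n (P.pair u')) * t)
              (tele Q.pair Q.involutive (bIdx m n) (bIdx_inj m n) Q.fixedPointFree (iotaQ m n)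
                (fun y => Conn Q P (embO m n z2) y) (fun v => conn_closure_Q Q P _ v)
                (fun y => cmpV (iotaP m n (u')) y + cmpV (iotaP m n (P.pair u')) y)))
        _ = (∑ u' : Fin n ⊕ Fin m, chi (Conn Q P (embO m n z1) (iotaP m n u') ∧ pordR m n u' < pordR m n (P.pair u')) *
    ((∑ v : Fin m ⊕ Fin n, chi (Conn Q P (embO m n z2) (iotaQ m n (v))) * cmpV (iotaP m n (u')) (iotaQ m n (v)))
      + (∑ v : Fin m ⊕ Fin n, chi (Conn Q P (embO m n z2) (iotaQ m n (v))) * cmpV (iotaP m n (P.pair u')) (iotaQ m n (v))))) :=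
            Finset.sum_congr rfl (fun u' _ => congrArg (fun t => chi (Conn Q P (embO m n z1) (iotaP m n u') ∧ pordR m n u' < pordR m n (P.pair u')) * t)
              ((Finset.sum_congr rfl (fun v _ => mul_add _ _ _)).trans
                Finset.sum_add_distrib))
        _ = (∑ u' : Fin n ⊕ Fin m, chi (Conn Q P (embO m n z1) (iotaP m n (u'))) *
    (∑ v : Fin m ⊕ Fin n, chi (Conn Q P (embO m n z2) (iotaQ m n (v))) * cmpV (iotaP m n (u')) (iotaQ m n (v)))) :=
            tele P.pair P.involutive (pordR m n) pordR_inj P.fixedPointFree (iotaP m n)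
              (fun y => Conn Q P (embO m n z1) y) (fun u' => conn_closure_P Q P _ u')
              (fun y => ∑ v : Fin m ⊕ Fin n, chi (Conn Q P (embO m n z2) (iotaQ m n (v))) * cmpV y (iotaQ m n (v)))
        _ = (∑ j : Fin n, chi (Conn Q P (embO m n z1) (Sum.inr (Sum.inl j))) *
    (∑ k : Fin n, chi (Conn Q P (embO m n z2) (Sum.inr (Sum.inl k))) *
      (if (k:ℕ) < (j:ℕ) then (1:ZMod 2) else 0))) := by
            rw [Fintype.sum_sum_type]
            have hz : (∑ i : Fin m, chi (Conn Q P (embO m n z1) (iotaP m n (Sum.inr i))) *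
                (∑ v : Fin m ⊕ Fin n, chi (Conn Q P (embO m n z2) (iotaQ m n (v))) * cmpV (iotaP m n (Sum.inr i)) (iotaQ m n (v)))) = 0 := by
              apply Finset.sum_eq_zero
              intro i _
              have hin : (∑ v : Fin m ⊕ Fin n, chi (Conn Q P (embO m n z2) (iotaQ m n (v))) * cmpV (iotaP m n (Sum.inr i)) (iotaQ m n (v))) = 0 := by
                apply Finset.sum_eq_zero
                intro v _
                have hc0 : cmpV (iotaP m n (Sum.inr i)) (iotaQ m n (v)) = 0 := by
                  rcases v with l | k <;> rfl
                rw [hc0, mul_zero]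
              rw [hin, mul_zero]
            rw [hz, add_zero]
            apply Finset.sum_congr rfl
            intro j _
            congr 1
            rw [Fintype.sum_sum_type]
            have hz2 : (∑ k : Fin m, chi (Conn Q P (embO m n z2) (iotaQ m n (Sum.inl k))) *
                cmpV (iotaP m n (Sum.inl j)) (iotaQ m n (Sum.inl k))) = 0 := by
              apply Finset.sum_eq_zero
              intro k _
              rw [show cmpV (iotaP m n (Sum.inl j)) (iotaQ m n (Sum.inl k)) = 0 from rfl, mul_zero]
            rw [hz2, zero_add]
            rfl
    calc _
        = ((∑ u : Fin m ⊕ Fin n, chi (Conn Q P (embO m n z1) (iotaQ m n u) ∧ bIdx m n u < bIdx m n (Q.pair u)) *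
    (∑ v : Fin m ⊕ Fin n, chi (Conn Q P (embO m n z2) (iotaQ m n v) ∧ bIdx m n v < bIdx m n (Q.pair v)) *
      ((fV (iotaQ m n (u)) (iotaQ m n (v)) + fV (iotaQ m n (Q.pair u)) (iotaQ m n (v))) +
       (fV (iotaQ m n (u)) (iotaQ m n (Q.pair v)) + fV (iotaQ m n (Q.pair u)) (iotaQ m n (Q.pair v)))))) + (∑ u : Fin m ⊕ Fin n, chi (Conn Q P (embO m n z1) (iotaQ m n u) ∧ bIdx m n u < bIdx m n (Q.pair u)) *
    (∑ w : Fin n ⊕ Fin m, chi (Conn Q P (embO m n z2) (iotaP m n w) ∧ pordR m n w < pordR m n (P.pair w)) *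
      ((fV (iotaQ m n (u)) (iotaP m n (w)) + fV (iotaQ m n (Q.pair u)) (iotaP m n (w))) +
       (fV (iotaQ m n (u)) (iotaP m n (P.pair w)) + fV (iotaQ m n (Q.pair u)) (iotaP m n (P.pair w))))))) + ((∑ u' : Fin n ⊕ Fin m, chi (Conn Q P (embO m n z1) (iotaP m n u') ∧ pordR m n u' < pordR m n (P.pair u')) *
    (∑ v : Fin m ⊕ Fin n, chi (Conn Q P (embO m n z2) (iotaQ m n v) ∧ bIdx m n v < bIdx m n (Q.pair v)) *
      ((fV (iotaP m n (u')) (iotaQ m n (v)) + fV (iotaP m n (P.pair u')) (iotaQ m n (v))) +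
       (fV (iotaP m n (u')) (iotaQ m n (Q.pair v)) + fV (iotaP m n (P.pair u')) (iotaQ m n (Q.pair v)))))) + (∑ u' : Fin n ⊕ Fin m, chi (Conn Q P (embO m n z1) (iotaP m n u') ∧ pordR m n u' < pordR m n (P.pair u')) *
    (∑ w : Fin n ⊕ Fin m, chi (Conn Q P (embO m n z2) (iotaP m n w) ∧ pordR m n w < pordR m n (P.pair w)) *
      ((fV (iotaP m n (u')) (iotaP m n (w)) + fV (iotaP m n (P.pair u')) (iotaP m n (w))) +
       (fV (iotaP m n (u')) (iotaP m n (P.pair w)) + fV (iotaP m n (P.pair u')) (iotaP m n (P.pair w))))))) := by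
          congr 1 <;>
            exact (Finset.sum_congr rfl (fun x _ => mul_add _ _ _)).trans
              Finset.sum_add_distrib
      _ = 0 := by rw [hA1, hA4, zero_add, add_zero, hA2, hA3, h2]

  rw [eval1] at eval2
  exact absurd eval2 (by decide)

end Noncross

section Counting

variable {m n : ℕ}

/-- the composite diagram of the connectivity pairing -/
noncomputable def wDiagram (Q : Diagram m n) (P : Diagram n m) : Diagram m m where
  pair := wmap Q P
  involutive := wmap_invol Q P
  fixedPointFree := wmap_ne Q P
  noncrossing := wmap_noncrossing Q P

lemma Diagram.ext' {a b : ℕ} {c d : Diagram a b} (h : c.pair = d.pair) : c = d := by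
  cases c; cases d; simpa using h

/-- closure arcs for the Markov trace, on the composite picture -/
def cloR (m n : ℕ) : Pt m n m → Pt m n m → Prop := fun x y =>
  ∃ i : Fin m, (x = Sum.inl i ∧ y = Sum.inr (Sum.inr i)) ∨
    (x = Sum.inr (Sum.inr i) ∧ y = Sum.inl i)

/-- the closed-up composite relation -/
def raRel (Q : Diagram m n) (P : Diagram n m) : Pt m n m → Pt m n m → Prop :=
  fun x y => Step Q P x y ∨ cloR m n x y

/-- the contracted annular relation on the points of the top diagram -/
def rwRel (Q : Diagram m n) (P : Diagram n m) : (Fin m ⊕ Fin n) → (Fin m ⊕ Fin n) → Prop :=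
  fun x y => Q.pair x = y ∨ Sum.swap (P.pair (Sum.swap x)) = y

/-- contraction map -/
def piC (m n : ℕ) : Pt m n m → Fin m ⊕ Fin n
  | Sum.inl i => Sum.inl i
  | Sum.inr (Sum.inl j) => Sum.inr j
  | Sum.inr (Sum.inr i) => Sum.inl i

/-- canonical section -/
def lftC (m n : ℕ) : Fin m ⊕ Fin n → Pt m n m
  | Sum.inl i => Sum.inl i
  | Sum.inr j => Sum.inr (Sum.inl j)

lemma piC_lftC (w : Fin m ⊕ Fin n) : piC m n (lftC m n w) = w := by cases w <;> rfl

lemma piC_iotaQ (u : Fin m ⊕ Fin n) : piC m n (iotaQ m n u) = u := by cases u <;> rfl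

lemma piC_iotaP (u : Fin n ⊕ Fin m) : piC m n (iotaP m n u) = Sum.swap u := by cases u <;> rfl

lemma piC_surj : Function.Surjective (piC m n) := fun w => ⟨lftC m n w, piC_lftC w⟩

variable (Q : Diagram m n) (P : Diagram n m)

lemma fiber_ra {a b : Pt m n m} (h : piC m n a = piC m n b) :
    Relation.EqvGen (raRel Q P) a b := by
  match a, b with
  | Sum.inl i, Sum.inl i' =>
      simp only [piC, Sum.inl.injEq] at h
      rw [h]; exact Relation.EqvGen.refl _
  | Sum.inl i, Sum.inr (Sum.inr i') =>
      simp only [piC, Sum.inl.injEq] at h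
      subst h
      exact Relation.EqvGen.rel _ _ (Or.inr ⟨i, Or.inl ⟨rfl, rfl⟩⟩)
  | Sum.inr (Sum.inr i), Sum.inl i' =>
      simp only [piC, Sum.inl.injEq] at h
      subst h
      exact Relation.EqvGen.rel _ _ (Or.inr ⟨i, Or.inr ⟨rfl, rfl⟩⟩)
  | Sum.inr (Sum.inr i), Sum.inr (Sum.inr i') =>
      simp only [piC, Sum.inl.injEq] at h
      rw [h]; exact Relation.EqvGen.refl _
  | Sum.inr (Sum.inl j), Sum.inr (Sum.inl j') =>
      simp only [piC, Sum.inr.injEq] at h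
      rw [h]; exact Relation.EqvGen.refl _
  | Sum.inl i, Sum.inr (Sum.inl j) => simp [piC] at h
  | Sum.inr (Sum.inl j), Sum.inl i => simp [piC] at h
  | Sum.inr (Sum.inl j), Sum.inr (Sum.inr i) => simp [piC] at h
  | Sum.inr (Sum.inr i), Sum.inr (Sum.inl j) => simp [piC] at h

lemma ra_to_rw {a b : Pt m n m} (h : Relation.EqvGen (raRel Q P) a b) :
    Relation.EqvGen (rwRel Q P) (piC m n a) (piC m n b) := by
  induction h with
  | rel x y hxy =>
      rcases hxy with hs | hc
      · rcases hs with ⟨u, rfl, rfl⟩ | ⟨u, rfl, rfl⟩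
        · rw [show Sum.map id Sum.inl u = iotaQ m n u from rfl,
            show Sum.map id Sum.inl (Q.pair u) = iotaQ m n (Q.pair u) from rfl,
            piC_iotaQ, piC_iotaQ]
          exact Relation.EqvGen.rel _ _ (Or.inl rfl)
        · rw [show (Sum.inr u : Pt m n m) = iotaP m n u from rfl,
            show (Sum.inr (P.pair u) : Pt m n m) = iotaP m n (P.pair u) from rfl,
            piC_iotaP, piC_iotaP]
          refine Relation.EqvGen.rel _ _ (Or.inr ?_)
          rw [Sum.swap_swap]
      · rcases hc with ⟨i, ⟨rfl, rfl⟩ | ⟨rfl, rfl⟩⟩ <;> exact Relation.EqvGen.refl _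
  | refl x => exact Relation.EqvGen.refl _
  | symm x y _ ih => exact Relation.EqvGen.symm _ _ ih
  | trans x y z _ _ ih1 ih2 => exact Relation.EqvGen.trans _ _ _ ih1 ih2

lemma rw_to_ra {w w' : Fin m ⊕ Fin n} (h : Relation.EqvGen (rwRel Q P) w w') :
    ∀ a b : Pt m n m, piC m n a = w → piC m n b = w' → Relation.EqvGen (raRel Q P) a b := by
  induction h with
  | rel x y hxy =>
      intro a b ha hb
      refine Relation.EqvGen.trans _ (lftC m n x) _ (fiber_ra Q P (by rw [ha, piC_lftC])) ?_
      refine Relation.EqvGen.trans _ (lftC m n y) _ ?_ (fiber_ra Q P (by rw [piC_lftC, hb]))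
      rcases hxy with hq | hp
      · -- Q strand: lftC x = iotaQ x
        have e1 : lftC m n x = iotaQ m n x := by cases x <;> rfl
        have e2 : lftC m n y = iotaQ m n y := by cases y <;> rfl
        rw [e1, e2, ← hq]
        exact Relation.EqvGen.rel _ _ (Or.inl (Or.inl ⟨x, rfl, rfl⟩))
      · -- P strand via iotaP (swap x)
        refine Relation.EqvGen.trans _ (iotaP m n (Sum.swap x)) _
          (fiber_ra Q P (by rw [piC_iotaP, Sum.swap_swap, piC_lftC])) ?_
        refine Relation.EqvGen.trans _ (iotaP m n (P.pair (Sum.swap x))) _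
          (Relation.EqvGen.rel _ _ (Or.inl (Or.inr ⟨Sum.swap x, rfl, rfl⟩))) ?_
        refine fiber_ra Q P ?_
        rw [piC_iotaP, piC_lftC, hp]
  | refl x =>
      intro a b ha hb
      exact fiber_ra Q P (by rw [ha, hb])
  | symm x y hxy ih =>
      intro a b ha hb
      exact Relation.EqvGen.symm _ _ (ih b a hb ha)
  | trans x y z _ _ ih1 ih2 =>
      intro a b ha hb
      exact Relation.EqvGen.trans _ _ _ (ih1 a (lftC m n y) ha (piC_lftC y))
        (ih2 (lftC m n y) b (piC_lftC y) hb)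

/-- equivalence of quotients: contraction -/
noncomputable def quotRAtoRW :
    Quotient (Relation.EqvGen.setoid (raRel Q P)) ≃
      Quotient (Relation.EqvGen.setoid (rwRel Q P)) :=
  quotEquivOfRel _ _ (piC m n) piC_surj
    (fun a b h => ra_to_rw Q P h)
    (fun a b h => rw_to_ra Q P h a b rfl rfl)

end Counting

section Counting2

variable {m n : ℕ} (Q : Diagram m n) (P : Diagram n m)

lemma conn_to_ra {a b : Pt m n m} (h : Conn Q P a b) :
    Relation.EqvGen (raRel Q P) a b :=
  eqvGen_congr (fun x y hxy => Relation.EqvGen.rel x y (Or.inl hxy)) h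

lemma cc_to_ra {z z' : Fin m ⊕ Fin m}
    (h : Relation.EqvGen (closeStep (wDiagram Q P)) z z') :
    Relation.EqvGen (raRel Q P) (embO m n z) (embO m n z') := by
  induction h with
  | rel x y hxy =>
      rcases hxy with hp | hf
      · have hc : Conn Q P (embO m n x) (embO m n y) := by
          rw [← hp]; exact wmap_conn Q P x
        exact conn_to_ra Q P hc
      · rcases x with i | i
        · have hy : y = Sum.inr i := hf.symm
          subst hy
          exact Relation.EqvGen.rel _ _ (Or.inr ⟨i, Or.inl ⟨rfl, rfl⟩⟩)
        · have hy : y = Sum.inl i := hf.symm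
          subst hy
          exact Relation.EqvGen.rel _ _ (Or.inr ⟨i, Or.inr ⟨rfl, rfl⟩⟩)
  | refl x => exact Relation.EqvGen.refl _
  | symm x y _ ih => exact Relation.EqvGen.symm _ _ ih
  | trans x y z _ _ ih1 ih2 => exact Relation.EqvGen.trans _ _ _ ih1 ih2

lemma midClosed {v : Pt m n m} (hm : ∀ y, Conn Q P v y → ∃ j, y = Sum.inr (Sum.inl j)) :
    ∀ y, Relation.EqvGen (raRel Q P) v y → Conn Q P v y := by
  intro y hy
  have hmem := eqvGen_iff_mem (S := {y | Conn Q P v y}) ?_ hy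
  · exact hmem.mp (Relation.EqvGen.refl v)
  · intro a b hab
    rcases hab with hs | hc
    · constructor
      · intro ha; exact Relation.EqvGen.trans _ _ _ ha (Relation.EqvGen.rel _ _ hs)
      · intro hb
        exact Relation.EqvGen.trans _ _ _ hb (Relation.EqvGen.symm _ _
          (Relation.EqvGen.rel _ _ hs))
    · rcases hc with ⟨i, ⟨rfl, rfl⟩ | ⟨rfl, rfl⟩⟩
      · constructor
        · intro ha; exact absurd (hm _ ha) (by simp)
        · intro hb; exact absurd (hm _ hb) (by simp)
      · constructor
        · intro ha; exact absurd (hm _ ha) (by simp)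
        · intro hb; exact absurd (hm _ hb) (by simp)

lemma conn_outer_cc {a : Pt m n m} {z z' : Fin m ⊕ Fin m}
    (hz : Conn Q P a (embO m n z)) (hz' : Conn Q P a (embO m n z')) :
    Relation.EqvGen (closeStep (wDiagram Q P)) z z' := by
  have hc : Conn Q P (embO m n z) (embO m n z') :=
    Relation.EqvGen.trans _ _ _ (Relation.EqvGen.symm _ _ hz) hz'
  rcases (conn_emb_iff Q P z z').mp hc with h | h
  · rw [h]; exact Relation.EqvGen.refl _
  · rw [h]
    exact Relation.EqvGen.rel _ _ (Or.inl rfl)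

lemma ra_outer : ∀ {a b : Pt m n m}, Relation.EqvGen (raRel Q P) a b →
    ∀ z z' : Fin m ⊕ Fin m, Conn Q P a (embO m n z) → Conn Q P b (embO m n z') →
    Relation.EqvGen (closeStep (wDiagram Q P)) z z' := by
  intro a b h
  induction h with
  | rel x y hxy =>
      intro z z' hz hz'
      rcases hxy with hs | hc
      · have hxz' : Conn Q P x (embO m n z') :=
          Relation.EqvGen.trans _ _ _ (Relation.EqvGen.rel _ _ hs) hz'
        exact conn_outer_cc Q P hz hxz'
      · rcases hc with ⟨i, ⟨rfl, rfl⟩ | ⟨rfl, rfl⟩⟩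
        · -- x = top i = embO (inl i), y = bottom i = embO (inr i)
          have h1 : Relation.EqvGen (closeStep (wDiagram Q P)) z (Sum.inl i) :=
            conn_outer_cc Q P hz (Relation.EqvGen.refl _)
          have h2 : Relation.EqvGen (closeStep (wDiagram Q P)) (Sum.inr i) z' :=
            conn_outer_cc Q P (Relation.EqvGen.refl _) hz'
          have h3 : Relation.EqvGen (closeStep (wDiagram Q P)) (Sum.inl i) (Sum.inr i) :=
            Relation.EqvGen.rel _ _ (Or.inr rfl)
          exact Relation.EqvGen.trans _ _ _ (Relation.EqvGen.trans _ _ _ h1 h3) h2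
        · have h1 : Relation.EqvGen (closeStep (wDiagram Q P)) z (Sum.inr i) :=
            conn_outer_cc Q P hz (Relation.EqvGen.refl _)
          have h2 : Relation.EqvGen (closeStep (wDiagram Q P)) (Sum.inl i) z' :=
            conn_outer_cc Q P (Relation.EqvGen.refl _) hz'
          have h3 : Relation.EqvGen (closeStep (wDiagram Q P)) (Sum.inr i) (Sum.inl i) :=
            Relation.EqvGen.rel _ _ (Or.inr rfl)
          exact Relation.EqvGen.trans _ _ _ (Relation.EqvGen.trans _ _ _ h1 h3) h2
  | refl x =>
      intro z z' hz hz'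
      exact conn_outer_cc Q P hz hz'
  | symm x y _ ih =>
      intro z z' hz hz'
      exact Relation.EqvGen.symm _ _ (ih z' z hz' hz)
  | trans x y w hxy hyw ih1 ih2 =>
      intro z z' hz hz'
      by_cases hmid : ∃ z0 : Fin m ⊕ Fin m, Conn Q P y (embO m n z0)
      · obtain ⟨z0, hz0⟩ := hmid
        exact Relation.EqvGen.trans _ _ _ (ih1 z z0 hz hz0) (ih2 z0 z' hz0 hz')
      · exfalso
        have hm : ∀ t, Conn Q P y t → ∃ j, t = Sum.inr (Sum.inl j) := by
          intro t ht
          match t with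
          | Sum.inl i => exact absurd ⟨Sum.inl i, ht⟩ hmid
          | Sum.inr (Sum.inl j) => exact ⟨j, rfl⟩
          | Sum.inr (Sum.inr i) => exact absurd ⟨Sum.inr i, ht⟩ hmid
        have hyx : Conn Q P y x := midClosed Q P hm x (Relation.EqvGen.symm _ _ hxy)
        exact hmid ⟨z, Relation.EqvGen.trans _ _ _ hyx hz⟩

end Counting2

section Counting3

variable {m n : ℕ} (Q : Diagram m n) (P : Diagram n m)

/-- the setoid used in `numLoops` -/
noncomputable def cmSetoid : Setoid (ClosedMid Q P) :=
  ⟨fun x y : ClosedMid Q P => Conn Q P x.1 y.1,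
    ⟨fun _ => Relation.EqvGen.refl _, fun h => Relation.EqvGen.symm _ _ h,
      fun h h' => Relation.EqvGen.trans _ _ _ h h'⟩⟩

lemma numLoops_eq : numLoops Q P = Nat.card (Quotient (cmSetoid Q P)) := rfl

lemma trLoops_eq : trLoops (wDiagram Q P) =
    Nat.card (Quotient (Relation.EqvGen.setoid (closeStep (wDiagram Q P)))) := rfl

/-- the partition of the annular components -/
noncomputable def quotSplit :
    (Quotient (Relation.EqvGen.setoid (closeStep (wDiagram Q P))) ⊕
      Quotient (cmSetoid Q P)) ≃
    Quotient (Relation.EqvGen.setoid (raRel Q P)) := by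
  refine Equiv.ofBijective (Sum.elim
    (Quotient.lift (fun z => (⟦embO m n z⟧ : Quotient (Relation.EqvGen.setoid (raRel Q P))))
      (fun a b h => Quotient.sound (cc_to_ra Q P h)))
    (Quotient.lift (fun x : ClosedMid Q P =>
        (⟦x.1⟧ : Quotient (Relation.EqvGen.setoid (raRel Q P))))
      (fun a b h => Quotient.sound (conn_to_ra Q P h)))) ⟨?_, ?_⟩
  · -- injective
    rintro (q1 | q1) (q2 | q2)
    · refine Quotient.ind₂ (fun z z' => ?_) q1 q2
      intro h
      have hra : Relation.EqvGen (raRel Q P) (embO m n z) (embO m n z') := Quotient.exact h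
      exact congrArg Sum.inl (Quotient.sound
        (ra_outer Q P hra z z' (Relation.EqvGen.refl _) (Relation.EqvGen.refl _)))
    · refine Quotient.ind₂ (fun z x => ?_) q1 q2
      intro h
      exfalso
      have hra : Relation.EqvGen (raRel Q P) (embO m n z) x.1 := Quotient.exact h
      have hconn : Conn Q P x.1 (embO m n z) :=
        midClosed Q P x.2.2 _ (Relation.EqvGen.symm _ _ hra)
      obtain ⟨j, hj⟩ := x.2.2 _ hconn
      rcases z with i | i <;> simp [embO] at hj
    · refine Quotient.ind₂ (fun x z => ?_) q1 q2
      intro h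
      exfalso
      have hra : Relation.EqvGen (raRel Q P) x.1 (embO m n z) := Quotient.exact h
      have hconn : Conn Q P x.1 (embO m n z) := midClosed Q P x.2.2 _ hra
      obtain ⟨j, hj⟩ := x.2.2 _ hconn
      rcases z with i | i <;> simp [embO] at hj
    · refine Quotient.ind₂ (fun x y => ?_) q1 q2
      intro h
      have hra : Relation.EqvGen (raRel Q P) x.1 y.1 := Quotient.exact h
      exact congrArg Sum.inr (Quotient.sound (midClosed Q P x.2.2 _ hra))
  · -- surjective
    refine Quotient.ind (fun v => ?_)
    by_cases hout : ∃ z : Fin m ⊕ Fin m, Conn Q P v (embO m n z)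
    · obtain ⟨z, hz⟩ := hout
      refine ⟨Sum.inl ⟦z⟧, ?_⟩
      simp only [Sum.elim_inl, Quotient.lift_mk]
      exact Quotient.sound (Relation.EqvGen.symm _ _ (conn_to_ra Q P hz))
    · have hm : ∀ t, Conn Q P v t → ∃ j, t = Sum.inr (Sum.inl j) := by
        intro t ht
        match t with
        | Sum.inl i => exact absurd ⟨Sum.inl i, ht⟩ hout
        | Sum.inr (Sum.inl j) => exact ⟨j, rfl⟩
        | Sum.inr (Sum.inr i) => exact absurd ⟨Sum.inr i, ht⟩ hout
      obtain ⟨j, hj⟩ := hm v (Relation.EqvGen.refl v)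
      have hvmem : v ∈ ClosedMid Q P := ⟨⟨j, hj⟩, hm⟩
      exact ⟨Sum.inr ⟦⟨v, hvmem⟩⟧, rfl⟩

lemma count_eq : numLoops Q P + trLoops (wDiagram Q P) =
    Nat.card (Quotient (Relation.EqvGen.setoid (rwRel Q P))) := by
  have h1 : Nat.card (Quotient (Relation.EqvGen.setoid (closeStep (wDiagram Q P))) ⊕
      Quotient (cmSetoid Q P))
      = Nat.card (Quotient (Relation.EqvGen.setoid (raRel Q P))) :=
    Nat.card_congr (quotSplit Q P)
  rw [Nat.card_sum] at h1
  have h2 : Nat.card (Quotient (Relation.EqvGen.setoid (raRel Q P)))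
      = Nat.card (Quotient (Relation.EqvGen.setoid (rwRel Q P))) :=
    Nat.card_congr (quotRAtoRW Q P)
  rw [numLoops_eq, trLoops_eq]
  omega

end Counting3

section Final

variable {K : Type} [Field K]

lemma compD_eq (d : K) {r s : ℕ} (Qd : Diagram r s) (Pd : Diagram s r) (c : Diagram r r) :
    compD d Pd Qd c = if c = wDiagram Qd Pd then d ^ numLoops Qd Pd else 0 := by
  by_cases h : c = wDiagram Qd Pd
  · subst h
    rw [if_pos rfl]
    unfold compD
    rw [if_pos]
    intro x
    exact wmap_conn Qd Pd x
  · rw [if_neg h]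
    unfold compD
    rw [if_neg]
    intro hcond
    apply h
    apply Diagram.ext'
    funext x
    exact wmap_uniq Qd Pd (c.fixedPointFree x) (hcond x)

lemma keyA (d : K) {r s : ℕ} (Qd : Diagram r s) (Pd : Diagram s r) :
    ∑ c : Diagram r r, compD d Pd Qd c * d ^ trLoops c
      = d ^ Nat.card (Quotient (Relation.EqvGen.setoid (rwRel Qd Pd))) := by
  have key : ∀ c : Diagram r r, compD d Pd Qd c * d ^ trLoops c
      = if c = wDiagram Qd Pd then d ^ numLoops Qd Pd * d ^ trLoops c else 0 := by
    intro c
    rw [compD_eq]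
    split_ifs <;> simp
  rw [Finset.sum_congr rfl (fun c _ => key c),
    Finset.sum_ite_eq' Finset.univ (wDiagram Qd Pd)
      (fun c => d ^ numLoops Qd Pd * d ^ trLoops c),
    if_pos (Finset.mem_univ _), ← pow_add, count_eq Qd Pd]

lemma rw_swap {r s : ℕ} (Qd : Diagram r s) (Pd : Diagram s r) {u v : Fin r ⊕ Fin s}
    (h : Relation.EqvGen (rwRel Qd Pd) u v) :
    Relation.EqvGen (rwRel Pd Qd) (Sum.swap u) (Sum.swap v) := by
  induction h with
  | rel x y hxy =>
      refine Relation.EqvGen.rel _ _ ?_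
      rcases hxy with hq | hp
      · exact Or.inr (by rw [Sum.swap_swap, hq])
      · exact Or.inl (by rw [← hp, Sum.swap_swap])
  | refl x => exact Relation.EqvGen.refl _
  | symm x y _ ih => exact Relation.EqvGen.symm _ _ ih
  | trans x y z _ _ ih1 ih2 => exact Relation.EqvGen.trans _ _ _ ih1 ih2

lemma card_rw_symm {r s : ℕ} (Qd : Diagram r s) (Pd : Diagram s r) :
    Nat.card (Quotient (Relation.EqvGen.setoid (rwRel Qd Pd)))
      = Nat.card (Quotient (Relation.EqvGen.setoid (rwRel Pd Qd))) := by
  refine Nat.card_congr (quotEquivOfRel _ _ Sum.swap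
    (fun x => ⟨Sum.swap x, Sum.swap_swap x⟩) (fun a b h => rw_swap Qd Pd h) ?_)
  intro a b h
  have h2 := rw_swap Pd Qd h
  rwa [Sum.swap_swap, Sum.swap_swap] at h2

end Final

section Final2

variable {K : Type} [Field K]

lemma TrComp (d : K) {r s : ℕ} (x : Hom K s r) (y : Hom K r s) :
    Tr d (comp d x y) = ∑ Pd : Diagram s r, ∑ Qd : Diagram r s,
      x Pd * y Qd * d ^ Nat.card (Quotient (Relation.EqvGen.setoid (rwRel Qd Pd))) := by
  calc Tr d (comp d x y)
      = ∑ c : Diagram r r, (∑ Pd : Diagram s r, ∑ Qd : Diagram r s,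
          x Pd * y Qd * compD d Pd Qd c) * d ^ trLoops c := rfl
    _ = ∑ c : Diagram r r, ∑ Pd : Diagram s r, ∑ Qd : Diagram r s,
          x Pd * y Qd * compD d Pd Qd c * d ^ trLoops c := by
        refine Finset.sum_congr rfl (fun c _ => ?_)
        rw [Finset.sum_mul]
        exact Finset.sum_congr rfl (fun Pd _ => by rw [Finset.sum_mul])
    _ = ∑ Pd : Diagram s r, ∑ c : Diagram r r, ∑ Qd : Diagram r s,
          x Pd * y Qd * compD d Pd Qd c * d ^ trLoops c := Finset.sum_comm
    _ = ∑ Pd : Diagram s r, ∑ Qd : Diagram r s, ∑ c : Diagram r r,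
          x Pd * y Qd * compD d Pd Qd c * d ^ trLoops c :=
        Finset.sum_congr rfl (fun Pd _ => Finset.sum_comm)
    _ = ∑ Pd : Diagram s r, ∑ Qd : Diagram r s,
          x Pd * y Qd * ∑ c : Diagram r r, compD d Pd Qd c * d ^ trLoops c := by
        refine Finset.sum_congr rfl (fun Pd _ => Finset.sum_congr rfl (fun Qd _ => ?_))
        rw [Finset.mul_sum]
        exact Finset.sum_congr rfl (fun c _ => by ring)
    _ = ∑ Pd : Diagram s r, ∑ Qd : Diagram r s,
          x Pd * y Qd * d ^ Nat.card (Quotient (Relation.EqvGen.setoid (rwRel Qd Pd))) :=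
        Finset.sum_congr rfl (fun Pd _ => Finset.sum_congr rfl (fun Qd _ => by
          rw [keyA d Qd Pd]))

end Final2


/-- the Markov trace satisfies `Tr_m(b∘a) = Tr_n(a∘b)` for all
`a ∈ Hom(m,n)` and `b ∈ Hom(n,m)`. -/
theorem stmt10 (K : Type) [Field K] (d : K) (m n : ℕ)
    (a : Hom K m n) (b : Hom K n m) :
    Tr d (comp d b a) = Tr d (comp d a b) := by
  rw [TrComp d b a, TrComp d a b]
  rw [Finset.sum_comm]
  refine Finset.sum_congr rfl (fun Qd _ => Finset.sum_congr rfl (fun Pd _ => ?_))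
  rw [card_rw_symm (Qd := Pd) (Pd := Qd)]
  ring

end TL
end

section
/- Let K be a field and d ∈ K, and consider the Temperley–Lieb category over (K,d). (i) For n < m with m − n = 2k even, the linear maps Hom(n,m) → T_m, a ↦ a⊗∪^{⊗k}, and Hom(m,n) → T_m, b ↦ b⊗∩^{⊗k}, are injective. (ii) If J is a nonzero ideal of the category, then J ∩ T_n ≠ 0 for some n ∈ ℕ. -/
/-!
Common definitions: the Temperley–Lieb category over a field `K` with loop
parameter `d`.

An `(m,n)`-Temperley–Lieb diagram is a noncrossing perfect matching of `m`
marked points on the top edge and `n` marked points on the bottom edge of a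
rectangle.  We encode it as a fixed-point-free involution of
`Fin m ⊕ Fin n` (`Sum.inl i` is the `i`-th top point, `Sum.inr j` the `j`-th
bottom point) which is noncrossing with respect to the boundary order of the
points (top points from left to right, then bottom points from right to left).
-/

open scoped Classical

namespace TL

variable {K : Type} [Field K]

/-! ### Auxiliary lemmas for statement 15 -/

lemma Diagram.pair_injective {m n : ℕ} :
    Function.Injective (Diagram.pair (m := m) (n := n)) := by
  intro a b h; cases a; cases b; simpa using h

lemma bIdx_injective (m n : ℕ) : Function.Injective (bIdx m n) := by
  rintro (i | j) (i' | j') h <;> simp only [bIdx] at h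
  · exact congrArg Sum.inl (Fin.ext h)
  · have := i.isLt; omega
  · have := i'.isLt; omega
  · have h1 := j.isLt; have h2 := j'.isLt
    exact congrArg Sum.inr (Fin.ext (by omega))

lemma bIdx_lt (m n : ℕ) (x : Fin m ⊕ Fin n) : bIdx m n x < m + n := by
  rcases x with i | j
  · simp only [bIdx]; have := i.isLt; omega
  · simp only [bIdx]; have := j.isLt; omega

lemma tEquiv_symm_inl_inl (m n m' n' : ℕ) (i : Fin m) :
    (tEquiv m n m' n').symm (Sum.inl (Sum.inl i)) = Sum.inl (Fin.castAdd m' i) := by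
  simp [tEquiv, Equiv.sumSumSumComm]

lemma tEquiv_symm_inl_inr (m n m' n' : ℕ) (j : Fin n) :
    (tEquiv m n m' n').symm (Sum.inl (Sum.inr j)) = Sum.inr (Fin.castAdd n' j) := by
  simp [tEquiv, Equiv.sumSumSumComm]

lemma tEquiv_symm_inr_inl (m n m' n' : ℕ) (i : Fin m') :
    (tEquiv m n m' n').symm (Sum.inr (Sum.inl i)) = Sum.inl (Fin.natAdd m i) := by
  simp [tEquiv, Equiv.sumSumSumComm]

lemma tEquiv_symm_inr_inr (m n m' n' : ℕ) (j : Fin n') :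
    (tEquiv m n m' n').symm (Sum.inr (Sum.inr j)) = Sum.inr (Fin.natAdd n j) := by
  simp [tEquiv, Equiv.sumSumSumComm]

lemma bIdx_left {m n m' n' : ℕ} (u : Fin m ⊕ Fin n) :
    bIdx (m + m') (n + n') ((tEquiv m n m' n').symm (Sum.inl u)) =
      (if bIdx m n u < m then bIdx m n u else bIdx m n u + (m' + n')) := by
  rcases u with i | j
  · rw [tEquiv_symm_inl_inl]
    simp only [bIdx, Fin.coe_castAdd]
    show (i : ℕ) = if (i : ℕ) < m then (i : ℕ) else (i : ℕ) + (m' + n')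
    rw [if_pos i.isLt]
  · rw [tEquiv_symm_inl_inr]
    simp only [bIdx, Fin.coe_castAdd]
    show m + m' + (n + n' - 1 - (j : ℕ)) = if m + (n - 1 - (j : ℕ)) < m then m + (n - 1 - (j : ℕ)) else m + (n - 1 - (j : ℕ)) + (m' + n')
    rw [if_neg (by omega)]
    have := j.isLt; omega

lemma bIdx_right {m n m' n' : ℕ} (u : Fin m' ⊕ Fin n') :
    bIdx (m + m') (n + n') ((tEquiv m n m' n').symm (Sum.inr u)) = m + bIdx m' n' u := by
  rcases u with i | j
  · rw [tEquiv_symm_inr_inl]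
    simp only [bIdx, Fin.coe_natAdd]
  · rw [tEquiv_symm_inr_inr]
    simp only [bIdx, Fin.coe_natAdd]
    have := j.isLt; omega

lemma tensorPair_apply {m n m' n' : ℕ} (p : Diagram m n) (q : Diagram m' n')
    (z : (Fin m ⊕ Fin n) ⊕ (Fin m' ⊕ Fin n')) :
    tensorPair p q ((tEquiv m n m' n').symm z) =
      (tEquiv m n m' n').symm (Sum.map p.pair q.pair z) := by
  unfold tensorPair; rw [Equiv.apply_symm_apply]

lemma ite_lt_ite_iff (m c a b : ℕ) :
    (if a < m then a else a + c) < (if b < m then b else b + c) ↔ a < b := by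
  split_ifs <;> omega

lemma ite_range (m c a : ℕ) :
    (if a < m then a else a + c) < m ∨ m + c ≤ (if a < m then a else a + c) := by
  split_ifs <;> omega

lemma tensorPair_involutive {m n m' n' : ℕ} (p : Diagram m n) (q : Diagram m' n') :
    Function.Involutive (tensorPair p q) := by
  have h : ∀ z, Sum.map p.pair q.pair (Sum.map p.pair q.pair z) = z := by
    rintro (u | u)
    · simp [p.involutive u]
    · simp [q.involutive u]
  intro x
  unfold tensorPair
  rw [Equiv.apply_symm_apply, h, Equiv.symm_apply_apply]

lemma tensorPair_fpf {m n m' n' : ℕ} (p : Diagram m n) (q : Diagram m' n') :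
    ∀ x, tensorPair p q x ≠ x := by
  intro x h
  unfold tensorPair at h
  have h2 := congrArg (tEquiv m n m' n') h
  rw [Equiv.apply_symm_apply] at h2
  rcases hx : (tEquiv m n m' n') x with u | u <;> rw [hx] at h2
  · simp only [Sum.map_inl, Sum.inl.injEq] at h2
    exact p.fixedPointFree u h2
  · simp only [Sum.map_inr, Sum.inr.injEq] at h2
    exact q.fixedPointFree u h2

lemma tensorPair_noncrossing {m n m' n' : ℕ} (p : Diagram m n) (q : Diagram m' n') :
    ∀ x y, ¬ (bIdx (m + m') (n + n') x < bIdx (m + m') (n + n') y ∧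
      bIdx (m + m') (n + n') y < bIdx (m + m') (n + n') (tensorPair p q x) ∧
      bIdx (m + m') (n + n') (tensorPair p q x) < bIdx (m + m') (n + n') (tensorPair p q y)) := by
  intro x y hc
  obtain ⟨z, rfl⟩ : ∃ z, x = (tEquiv m n m' n').symm z :=
    ⟨tEquiv m n m' n' x, ((tEquiv m n m' n').symm_apply_apply x).symm⟩
  obtain ⟨w, rfl⟩ : ∃ w, y = (tEquiv m n m' n').symm w :=
    ⟨tEquiv m n m' n' y, ((tEquiv m n m' n').symm_apply_apply y).symm⟩
  rw [tensorPair_apply, tensorPair_apply] at hc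
  obtain ⟨h1, h2, h3⟩ := hc
  rcases z with u | u <;> rcases w with v | v <;>
    simp only [Sum.map_inl, Sum.map_inr, bIdx_left, bIdx_right] at h1 h2 h3
  · rw [ite_lt_ite_iff] at h1 h2 h3
    exact p.noncrossing u v ⟨h1, h2, h3⟩
  · have r1 := ite_range m (m' + n') (bIdx m n (p.pair u))
    have r2 := bIdx_lt m' n' v
    have r3 := bIdx_lt m' n' (q.pair v)
    omega
  · have r1 := ite_range m (m' + n') (bIdx m n v)
    have r2 := bIdx_lt m' n' (q.pair u)
    omega
  · simp only [add_lt_add_iff_left] at h1 h2 h3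
    exact q.noncrossing u v ⟨h1, h2, h3⟩

/-- The tensor product of two diagrams as a diagram. -/
def tensorDiagram {m n m' n' : ℕ} (p : Diagram m n) (q : Diagram m' n') :
    Diagram (m + m') (n + n') where
  pair := tensorPair p q
  involutive := tensorPair_involutive p q
  fixedPointFree := tensorPair_fpf p q
  noncrossing := tensorPair_noncrossing p q

lemma tensorPair_left_inj {m n m' n' : ℕ} {p p' : Diagram m n} (q : Diagram m' n')
    (h : tensorPair p q = tensorPair p' q) : p = p' := by
  apply Diagram.pair_injective
  funext u
  have h2 := congrFun h ((tEquiv m n m' n').symm (Sum.inl u))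
  rw [show tensorPair p q ((tEquiv m n m' n').symm (Sum.inl u)) = _ from tensorPair_apply p q _,
    show tensorPair p' q ((tEquiv m n m' n').symm (Sum.inl u)) = _ from tensorPair_apply p' q _]
    at h2
  have h3 := (tEquiv m n m' n').symm.injective h2
  simpa using h3

lemma tensorD_eq {m n m' n' : ℕ} (p : Diagram m n) (q : Diagram m' n') :
    (tensorD p q : Hom K _ _) = single (tensorDiagram p q) := by
  funext c
  unfold tensorD single
  have hpair : (tensorDiagram p q).pair = tensorPair p q := rfl
  by_cases h : c = tensorDiagram p q
  · subst h
    rw [if_pos rfl, hpair, if_pos rfl]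
  · rw [if_neg h, if_neg]
    intro hp
    exact h (Diagram.pair_injective hp)

lemma tensor_single_sum {m n m' n' : ℕ} (x : Hom K m n) (q : Diagram m' n')
    (c : Diagram (m + m') (n + n')) :
    tensor x (single q) c = ∑ p' : Diagram m n, x p' * tensorD p' q c := by
  unfold tensor
  refine Finset.sum_congr rfl fun p' _ => ?_
  rw [Finset.sum_eq_single q]
  · simp [single]
  · intro q' _ hq'; simp [single, hq']
  · simp

lemma tensor_single_apply {m n m' n' : ℕ} (x : Hom K m n) (q : Diagram m' n')
    (p : Diagram m n) :
    tensor x (single q) (tensorDiagram p q) = x p := by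
  rw [tensor_single_sum, Finset.sum_eq_single p]
  · have : tensorD (K := K) p q (tensorDiagram p q) = 1 := by
      unfold tensorD
      rw [if_pos (show (tensorDiagram p q).pair = tensorPair p q from rfl)]
    rw [this, mul_one]
  · intro p' _ hp'
    have : tensorD (K := K) p' q (tensorDiagram p q) = 0 := by
      unfold tensorD
      rw [if_neg]
      intro h
      exact hp' (tensorPair_left_inj q h.symm)
    rw [this, mul_zero]
  · simp

lemma tensor_single_injective {m n m' n' : ℕ} (q : Diagram m' n') :
    Function.Injective (fun x : Hom K m n => tensor x (single q)) := by
  intro a b h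
  funext p
  have h2 := congrFun h (tensorDiagram p q)
  simpa [tensor_single_apply] using h2

lemma tensor_single_single {m n m' n' : ℕ} (p : Diagram m n) (q : Diagram m' n') :
    tensor (single p : Hom K m n) (single q) = single (tensorDiagram p q) := by
  funext c
  rw [tensor_single_sum, ← tensorD_eq, Finset.sum_eq_single p]
  · simp [single]
  · intro p' _ hp'; simp [single, hp']
  · simp

lemma tensor_zero_left {m n m' n' : ℕ} (y : Hom K m' n') :
    tensor (0 : Hom K m n) y = 0 := by
  funext c; simp [tensor]

/-- The diagram underlying `cupPow`. -/
def cupPowD : (k : ℕ) → Diagram (2 * k) 0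
  | 0 => idD 0
  | k + 1 => tensorDiagram (cupPowD k) cupD

/-- The diagram underlying `capPow`. -/
def capPowD : (k : ℕ) → Diagram 0 (2 * k)
  | 0 => idD 0
  | k + 1 => tensorDiagram (capPowD k) capD

lemma cupPow_eq (k : ℕ) : cupPow K k = single (cupPowD k) := by
  induction k with
  | zero => rfl
  | succ k ih =>
    show tensor (cupPow K k) (cupHom K) = single (cupPowD (k + 1))
    rw [ih]
    exact tensor_single_single (cupPowD k) cupD

lemma capPow_eq (k : ℕ) : capPow K k = single (capPowD k) := by
  induction k with
  | zero => rfl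
  | succ k ih =>
    show tensor (capPow K k) (capHom K) = single (capPowD (k + 1))
    rw [ih]
    exact tensor_single_single (capPowD k) capD

lemma even_of_diagram {m n : ℕ} (D : Diagram m n) : Even (m + n) := by
  classical
  set S : Finset (Fin m ⊕ Fin n) :=
    Finset.univ.filter (fun a => bIdx m n a < bIdx m n (D.pair a)) with hS
  have hkey : ∀ a, bIdx m n (D.pair a) ≠ bIdx m n a := by
    intro a h
    exact D.fixedPointFree a (bIdx_injective m n h)
  have himg : Sᶜ = S.image D.pair := by
    ext a
    simp only [Finset.mem_compl, hS, Finset.mem_filter, Finset.mem_univ, true_and,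
      Finset.mem_image, not_lt]
    constructor
    · intro h
      refine ⟨D.pair a, ?_, D.involutive a⟩
      rw [D.involutive a]
      have := hkey a
      omega
    · rintro ⟨b, hb, rfl⟩
      rw [D.involutive b]
      omega
  have hcard : Sᶜ.card = S.card := by
    rw [himg, Finset.card_image_of_injective _ D.involutive.injective]
  have htot : S.card + Sᶜ.card = Fintype.card (Fin m ⊕ Fin n) :=
    Finset.card_add_card_compl S
  have hcardF : Fintype.card (Fin m ⊕ Fin n) = m + n := by simp
  exact ⟨S.card, by omega⟩

/-- (i) for `n < m` with `m − n = 2k`, the maps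
`a ↦ a⊗∪^{⊗k}` on `Hom(n,m)` and `b ↦ b⊗∩^{⊗k}` on `Hom(m,n)` are injective;
(ii) every nonzero ideal `J` satisfies `J ∩ T_n ≠ 0` for some `n`. -/
theorem stmt15 (K : Type) [Field K] (d : K) :
    (∀ n m k : ℕ, 0 < k → m = n + 2 * k →
      Function.Injective (fun a : Hom K n m => tensor a (cupPow K k)) ∧
      Function.Injective (fun b : Hom K m n => tensor b (capPow K k))) ∧
    (∀ J : ∀ m n : ℕ, Set (Hom K m n), IsIdeal d J → IdealNonzero J →
      ∃ (n : ℕ) (x : Hom K n n), x ∈ J n n ∧ x ≠ 0) := by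
  constructor
  · intro n m k hk hm
    subst hm
    constructor
    · rw [cupPow_eq]
      exact tensor_single_injective (cupPowD k)
    · rw [capPow_eq]
      exact tensor_single_injective (capPowD k)
  · intro J hJ hNZ
    obtain ⟨m, n, x, hx, hx0⟩ := hNZ
    obtain ⟨D, hD⟩ : ∃ D, x D ≠ 0 := by
      by_contra h
      push_neg at h
      exact hx0 (funext h)
    have heven := even_of_diagram D
    obtain ⟨t, ht⟩ := heven
    rcases lt_trichotomy m n with hlt | heq | hgt
    · obtain ⟨k, hn⟩ : ∃ k, n = m + 2 * k := ⟨t - m, by omega⟩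
      subst hn
      have hy : tensor x (cupPow K k) ∈ J (m + 2 * k) (m + 2 * k + 0) :=
        hJ.tensor_mem_left x (cupPow K k) hx
      have hy0 : tensor x (cupPow K k) ≠ 0 := by
        intro h0
        apply hx0
        apply tensor_single_injective (cupPowD k)
        show tensor x (single (cupPowD k)) = tensor (0 : Hom K m (m + 2 * k)) (single (cupPowD k))
        rw [tensor_zero_left, ← cupPow_eq]
        exact h0
      exact ⟨m + 2 * k, _, hy, hy0⟩
    · subst heq
      exact ⟨m, x, hx, hx0⟩
    · obtain ⟨k, hm⟩ : ∃ k, m = n + 2 * k := ⟨t - n, by omega⟩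
      subst hm
      have hy : tensor x (capPow K k) ∈ J (n + 2 * k + 0) (n + 2 * k) :=
        hJ.tensor_mem_left x (capPow K k) hx
      have hy0 : tensor x (capPow K k) ≠ 0 := by
        intro h0
        apply hx0
        apply tensor_single_injective (capPowD k)
        show tensor x (single (capPowD k)) = tensor (0 : Hom K (n + 2 * k) n) (single (capPowD k))
        rw [tensor_zero_left, ← capPow_eq]
        exact h0
      exact ⟨n + 2 * k, _, hy, hy0⟩

end TL
end
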